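/- arXiv:2601.05361 — 3 statements merged into one kernel-verified Lean document; each statement's English description precedes it below -/
import Mathlib

section
/- The geometric distribution satisfies no logarithmic Sobolev inequality, hence its site-resampling semigroup is not hypercontractive: for every p ∈ (0,1), letting G be Geometric(p) and for u ∈ (0,1) defining f_u : ℕ → ℝ by f_u(k) := ((1−u)/(1−p))^{k/2}, one has 𝔼[f_u(G)² log f_u(G)²] − 𝔼[f_u(G)²] log 𝔼[f_u(G)²] ~ p log(1/(1−p)) / u² and Var(f_u(G)) ~ p/u as u → 0⁺, so the ratio (𝔼[f_u(G)² log f_u(G)²] − 𝔼[f_u(G)²] log 𝔼[f_u(G)²]) / Var(f_u(G)) tends to +∞ as u → 0⁺. -/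
open MeasureTheory Real Filter Set Topology

namespace Stmt11

/-- Expectation of `h(G)` for `G` geometrically distributed with parameter `p`:
`𝔼[h(G)] = Σ_k p (1−p)^k h(k)`. -/
noncomputable def geomExp (p : ℝ) (h : ℕ → ℝ) : ℝ := ∑' k : ℕ, p * (1 - p) ^ k * h k

/-- The test function `f_u(k) = ((1−u)/(1−p))^{k/2}`. -/
noncomputable def fu (p u : ℝ) (k : ℕ) : ℝ := ((1 - u) / (1 - p)) ^ ((k : ℝ) / 2)

/-- The entropy of `f_u²` with respect to the geometric(p) law:
`𝔼[f_u² log f_u²] − 𝔼[f_u²] log 𝔼[f_u²]`. -/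
noncomputable def geomEnt (p u : ℝ) : ℝ :=
  geomExp p (fun k => (fu p u k) ^ 2 * Real.log ((fu p u k) ^ 2)) -
    geomExp p (fun k => (fu p u k) ^ 2) *
      Real.log (geomExp p (fun k => (fu p u k) ^ 2))

/-- The variance of `f_u(G)`: `𝔼[f_u²] − (𝔼[f_u])²`. -/
noncomputable def geomVar (p u : ℝ) : ℝ :=
  geomExp p (fun k => (fu p u k) ^ 2) - (geomExp p (fun k => fu p u k)) ^ 2

section lemmas

variable {p u : ℝ}

lemma fu_sq (hp : p ∈ Set.Ioo (0:ℝ) 1) (hu : u ∈ Set.Ioo (0:ℝ) 1) (k : ℕ) :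
    (fu p u k) ^ 2 = ((1 - u) / (1 - p)) ^ k := by
  have hr : (0:ℝ) < (1 - u) / (1 - p) :=
    div_pos (by linarith [hu.2]) (by linarith [hp.2])
  rw [fu, sq, ← Real.rpow_add hr, show (k:ℝ)/2 + (k:ℝ)/2 = (k:ℝ) by ring,
    Real.rpow_natCast]

lemma sumA (hp : p ∈ Set.Ioo (0:ℝ) 1) (hu : u ∈ Set.Ioo (0:ℝ) 1) :
    geomExp p (fun k => (fu p u k) ^ 2) = p / u := by
  have h1p : (0:ℝ) < 1 - p := by linarith [hp.2]
  have h1u : (0:ℝ) < 1 - u := by linarith [hu.2]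
  have key : ∀ k : ℕ, p * (1 - p) ^ k * (fu p u k) ^ 2 = p * (1 - u) ^ k := by
    intro k
    rw [fu_sq hp hu, mul_assoc, ← mul_pow, mul_div_cancel₀ _ h1p.ne']
  rw [geomExp, tsum_congr key, tsum_mul_left,
    tsum_geometric_of_lt_one h1u.le (by linarith [hu.1]),
    show (1:ℝ) - (1 - u) = u by ring, div_eq_mul_inv]

lemma sumB (hp : p ∈ Set.Ioo (0:ℝ) 1) (hu : u ∈ Set.Ioo (0:ℝ) 1) :
    geomExp p (fun k => (fu p u k) ^ 2 * Real.log ((fu p u k) ^ 2)) =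
      p * Real.log ((1 - u) / (1 - p)) * ((1 - u) / u ^ 2) := by
  have h1p : (0:ℝ) < 1 - p := by linarith [hp.2]
  have h1u : (0:ℝ) < 1 - u := by linarith [hu.2]
  have key : ∀ k : ℕ, p * (1 - p) ^ k * ((fu p u k) ^ 2 * Real.log ((fu p u k) ^ 2)) =
      (p * Real.log ((1 - u) / (1 - p))) * ((k : ℝ) * (1 - u) ^ k) := by
    intro k
    rw [fu_sq hp hu, Real.log_pow]
    have : p * (1 - p) ^ k * ((1 - u) / (1 - p)) ^ k = p * (1 - u) ^ k := by
      rw [mul_assoc, ← mul_pow, mul_div_cancel₀ _ h1p.ne']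
    calc p * (1 - p) ^ k * (((1-u)/(1-p)) ^ k * ((k:ℝ) * Real.log ((1-u)/(1-p))))
        = (p * (1 - p) ^ k * ((1-u)/(1-p)) ^ k) * ((k:ℝ) * Real.log ((1-u)/(1-p))) := by ring
      _ = (p * (1 - u) ^ k) * ((k:ℝ) * Real.log ((1-u)/(1-p))) := by rw [this]
      _ = (p * Real.log ((1 - u) / (1 - p))) * ((k : ℝ) * (1 - u) ^ k) := by ring
  rw [geomExp, tsum_congr key, tsum_mul_left,
    tsum_coe_mul_geometric_of_norm_lt_one (by
      rw [Real.norm_eq_abs, abs_of_pos h1u]; linarith [hu.1]),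
    show (1:ℝ) - (1 - u) = u by ring]

lemma sumC (hp : p ∈ Set.Ioo (0:ℝ) 1) (hu : u ∈ Set.Ioo (0:ℝ) 1) :
    geomExp p (fun k => fu p u k) = p / (1 - Real.sqrt ((1 - p) * (1 - u))) := by
  have h1p : (0:ℝ) < 1 - p := by linarith [hp.2]
  have h1u : (0:ℝ) < 1 - u := by linarith [hu.2]
  have hr : (0:ℝ) < (1 - u) / (1 - p) := div_pos h1u h1p
  have hq0 : (0:ℝ) ≤ (1 - p) * (1 - u) := by positivity
  have hq1 : (1 - p) * (1 - u) < 1 := by nlinarith [hp.1, hu.1]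
  have hq : Real.sqrt ((1 - p) * (1 - u)) < 1 :=
    (Real.sqrt_lt' one_pos).2 (by nlinarith)
  have key : ∀ k : ℕ, p * (1 - p) ^ k * fu p u k =
      p * (Real.sqrt ((1 - p) * (1 - u))) ^ k := by
    intro k
    have h1 : fu p u k = (Real.sqrt ((1 - u) / (1 - p))) ^ k := by
      rw [fu, show (k:ℝ)/2 = (1/2) * (k:ℝ) by ring, Real.rpow_mul hr.le,
        Real.rpow_natCast, ← Real.sqrt_eq_rpow]
    have h2 : (1 - p) * Real.sqrt ((1 - u) / (1 - p)) =
        Real.sqrt ((1 - p) * (1 - u)) := by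
      rw [show (1:ℝ) - p = Real.sqrt ((1-p)^2) from (Real.sqrt_sq h1p.le).symm,
        ← Real.sqrt_mul (by positivity)]
      congr 1
      field_simp
      ring_nf
      rw [Real.sq_sqrt (by nlinarith)]
    rw [h1, mul_assoc, ← mul_pow, h2]
  rw [geomExp, tsum_congr key, tsum_mul_left,
    tsum_geometric_of_lt_one (Real.sqrt_nonneg _) hq, div_eq_mul_inv]

lemma div_ratio_eq (a b P L u : ℝ) (hP : P ≠ 0) (hL : L ≠ 0) (hu : u ≠ 0) :
    a / b = ((a / (P * L / u ^ 2)) / (b / (P / u))) * (L / u) := by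
  by_cases hb : b = 0
  · rw [hb, div_zero, zero_div, div_zero, zero_mul]
  · field_simp

end lemmas

/-- **The geometric distribution satisfies no logarithmic Sobolev inequality
(Section 2.5).**  For every `p ∈ (0,1)`, with `G` geometric(p) and
`f_u(k) = ((1−u)/(1−p))^{k/2}`, one has, as `u → 0⁺`,
`Ent(f_u²) ~ p log(1/(1−p)) / u²` and `Var(f_u(G)) ~ p/u`, so the ratio
`Ent(f_u²)/Var(f_u(G))` tends to `+∞`; hence the site-resampling semigroup of the
geometric distribution is not hypercontractive. -/
theorem geometric_no_logSobolev
    (p : ℝ) (hp : p ∈ Set.Ioo (0 : ℝ) 1) :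
    Tendsto (fun u : ℝ => geomEnt p u / (p * Real.log (1 / (1 - p)) / u ^ 2))
      (𝓝[>] (0 : ℝ)) (𝓝 1) ∧
    Tendsto (fun u : ℝ => geomVar p u / (p / u)) (𝓝[>] (0 : ℝ)) (𝓝 1) ∧
    Tendsto (fun u : ℝ => geomEnt p u / geomVar p u) (𝓝[>] (0 : ℝ)) atTop := by
  have h1p : (0:ℝ) < 1 - p := by linarith [hp.2]
  set L : ℝ := Real.log (1 / (1 - p)) with hLdef
  have hL : 0 < L := Real.log_pos (by rw [lt_div_iff₀ h1p]; linarith [hp.1])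
  have hLlog : L = - Real.log (1 - p) := by
    rw [hLdef, one_div, Real.log_inv]
  have hmem : Ioo (0:ℝ) 1 ∈ 𝓝[>] (0:ℝ) :=
    Ioo_mem_nhdsGT_of_mem (by constructor <;> norm_num)
  -- the model functions
  set g : ℝ → ℝ := fun u =>
    ((Real.log (1 - u) - Real.log (1 - p)) * (1 - u) - u * (Real.log p - Real.log u)) / L
    with hgdef
  set h : ℝ → ℝ := fun u => 1 - p * u / (1 - Real.sqrt ((1 - p) * (1 - u))) ^ 2 with hhdef
  -- eventual equalities
  have hEnt : ∀ u ∈ Ioo (0:ℝ) 1, geomEnt p u =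
      p * (Real.log (1 - u) - Real.log (1 - p)) * ((1 - u) / u ^ 2) -
      (p / u) * (Real.log p - Real.log u) := by
    intro u hu
    have hu0 : (0:ℝ) < u := hu.1
    rw [geomEnt, sumA hp hu, sumB hp hu,
      Real.log_div (by linarith [hu.2] : (1:ℝ)-u ≠ 0) h1p.ne',
      Real.log_div hp.1.ne' hu0.ne']
  have hq1 : ∀ u ∈ Ioo (0:ℝ) 1, Real.sqrt ((1 - p) * (1 - u)) < 1 := by
    intro u hu
    exact (Real.sqrt_lt' one_pos).2 (by nlinarith [hp.1, hu.1, hu.2])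
  have hVar : ∀ u ∈ Ioo (0:ℝ) 1, geomVar p u =
      p / u - (p / (1 - Real.sqrt ((1 - p) * (1 - u)))) ^ 2 := by
    intro u hu
    rw [geomVar, sumA hp hu, sumC hp hu]
  -- eventual equality for part 1
  have heq1 : ∀ u ∈ Ioo (0:ℝ) 1, geomEnt p u / (p * L / u ^ 2) = g u := by
    intro u hu
    rw [hEnt u hu, hgdef]
    have hu0 : u ≠ 0 := hu.1.ne'
    field_simp [hp.1.ne', hL.ne']
  -- eventual equality for part 2
  have heq2 : ∀ u ∈ Ioo (0:ℝ) 1, geomVar p u / (p / u) = h u := by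
    intro u hu
    rw [hVar u hu, hhdef]
    have hu0 : u ≠ 0 := hu.1.ne'
    have hq : (1:ℝ) - Real.sqrt ((1 - p) * (1 - u)) ≠ 0 :=
      sub_ne_zero.mpr (hq1 u hu).ne'
    field_simp [hp.1.ne']
  -- limit of g
  have hglim : Tendsto g (𝓝[>] (0:ℝ)) (𝓝 1) := by
    have hlog1u : Tendsto (fun u : ℝ => Real.log (1 - u)) (𝓝[>] (0:ℝ)) (𝓝 0) := by
      have : Tendsto (fun u : ℝ => (1:ℝ) - u) (𝓝 (0:ℝ)) (𝓝 1) := by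
        simpa [Pi.sub_def] using (continuous_const.sub continuous_id).tendsto (0:ℝ)
      have := (Real.continuousAt_log one_ne_zero).tendsto.comp this
      simpa [Function.comp_def] using this.mono_left nhdsWithin_le_nhds
    have hulogu : Tendsto (fun u : ℝ => u * Real.log u) (𝓝[>] (0:ℝ)) (𝓝 0) := by
      have h0 := _root_.tendsto_log_mul_rpow_nhdsGT_zero (r := 1) one_pos
      refine h0.congr' ?_
      filter_upwards [self_mem_nhdsWithin] with x hx
      rw [Real.rpow_one, mul_comm]
    have hnum : Tendsto (fun u : ℝ =>
        (Real.log (1 - u) - Real.log (1 - p)) * (1 - u) - u * (Real.log p - Real.log u))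
        (𝓝[>] (0:ℝ)) (𝓝 L) := by
      have h1 : Tendsto (fun u : ℝ => (Real.log (1 - u) - Real.log (1 - p)) * (1 - u))
          (𝓝[>] (0:ℝ)) (𝓝 L) := by
        have hb : Tendsto (fun u : ℝ => (1:ℝ) - u) (𝓝[>] (0:ℝ)) (𝓝 1) := by
          have : Tendsto (fun u : ℝ => (1:ℝ) - u) (𝓝 (0:ℝ)) (𝓝 1) := by
            simpa [Pi.sub_def] using (continuous_const.sub continuous_id).tendsto (0:ℝ)
          exact this.mono_left nhdsWithin_le_nhds
        have := (hlog1u.sub (tendsto_const_nhds (x := Real.log (1 - p)))).mul hb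
        simpa [hLlog] using this
      have h2 : Tendsto (fun u : ℝ => u * (Real.log p - Real.log u))
          (𝓝[>] (0:ℝ)) (𝓝 0) := by
        have hup : Tendsto (fun u : ℝ => u * Real.log p) (𝓝[>] (0:ℝ)) (𝓝 0) := by
          have : Tendsto (fun u : ℝ => u * Real.log p) (𝓝 (0:ℝ)) (𝓝 0) := by
            simpa [Pi.mul_def] using (continuous_id.mul continuous_const).tendsto (0:ℝ)
          exact this.mono_left nhdsWithin_le_nhds
        have := hup.sub hulogu
        simpa [mul_sub] using this
      simpa using h1.sub h2
    have := hnum.div_const L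
    simpa [div_self hL.ne'] using this
  -- limit of h
  have hhlim : Tendsto h (𝓝[>] (0:ℝ)) (𝓝 1) := by
    have hden : Tendsto (fun u : ℝ => (1 - Real.sqrt ((1 - p) * (1 - u))) ^ 2)
        (𝓝[>] (0:ℝ)) (𝓝 ((1 - Real.sqrt (1 - p)) ^ 2)) := by
      have hc : Tendsto (fun u : ℝ => (1 - Real.sqrt ((1 - p) * (1 - u)))) (𝓝 (0:ℝ))
          (𝓝 (1 - Real.sqrt (1 - p))) := by
        have : Continuous fun u : ℝ => 1 - Real.sqrt ((1 - p) * (1 - u)) := by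
          continuity
        simpa using this.tendsto 0
      exact ((hc.pow 2).mono_left nhdsWithin_le_nhds)
    have hsq : Real.sqrt (1 - p) < 1 :=
      (Real.sqrt_lt' one_pos).2 (by nlinarith [hp.1])
    have hdne : ((1:ℝ) - Real.sqrt (1 - p)) ^ 2 ≠ 0 :=
      pow_ne_zero 2 (sub_ne_zero.mpr hsq.ne')
    have hnum : Tendsto (fun u : ℝ => p * u) (𝓝[>] (0:ℝ)) (𝓝 0) := by
      have : Tendsto (fun u : ℝ => p * u) (𝓝 (0:ℝ)) (𝓝 0) := by
        simpa [Pi.mul_def] using (continuous_const.mul continuous_id).tendsto (0:ℝ)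
      exact this.mono_left nhdsWithin_le_nhds
    have := (tendsto_const_nhds (x := (1:ℝ))).sub ((hnum.div hden hdne))
    simpa [hhdef] using this
  have hP1 : Tendsto (fun u : ℝ => geomEnt p u / (p * L / u ^ 2)) (𝓝[>] (0:ℝ)) (𝓝 1) := by
    refine hglim.congr' ?_
    filter_upwards [hmem] with u hu
    exact (heq1 u hu).symm
  have hP2 : Tendsto (fun u : ℝ => geomVar p u / (p / u)) (𝓝[>] (0:ℝ)) (𝓝 1) := by
    refine hhlim.congr' ?_
    filter_upwards [hmem] with u hu
    exact (heq2 u hu).symm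
  refine ⟨hP1, hP2, ?_⟩
  -- part 3
  have hratio : Tendsto (fun u : ℝ =>
      (geomEnt p u / (p * L / u ^ 2)) / (geomVar p u / (p / u))) (𝓝[>] (0:ℝ)) (𝓝 1) := by
    simpa [Pi.div_def] using hP1.div hP2 one_ne_zero
  have hLu : Tendsto (fun u : ℝ => L / u) (𝓝[>] (0:ℝ)) atTop := by
    simpa [div_eq_mul_inv] using tendsto_inv_nhdsGT_zero.const_mul_atTop hL
  have := hratio.pos_mul_atTop one_pos hLu
  refine this.congr' ?_
  filter_upwards [hmem] with u hu
  exact (div_ratio_eq (geomEnt p u) (geomVar p u) p L u hp.1.ne' hL.ne' hu.1.ne').symm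

end Stmt11
end

section
/- Covariance decreases when more coordinates are resampled: let I be a finite set, Y = (Y_i)_{i∈I} and Y' = (Y'_i)_{i∈I} two independent vectors of independent real random variables with Y'_i equal in distribution to Y_i for each i, and for S ⊆ I let Y^S be defined by Y^S_i := Y'_i if i ∈ S and Y^S_i := Y_i otherwise. Let f : ℝ^I → ℝ satisfy 𝔼[f(Y)²] < ∞, and let 𝒮 and 𝒮̃ be random subsets of I, independent of (Y, Y'), with 𝒮 ⊆ 𝒮̃ almost surely. Then Cov(f(Y), f(Y^𝒮)) ≥ Cov(f(Y), f(Y^𝒮̃)). -/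
open MeasureTheory ProbabilityTheory Real Filter Set Topology Classical

namespace Stmt17

/-- Covariance of two real random variables. -/
noncomputable def cov {Ω : Type*} [MeasurableSpace Ω] (P : Measure Ω) (X Y : Ω → ℝ) : ℝ :=
  ∫ a, (X a - ∫ b, X b ∂P) * (Y a - ∫ b, Y b ∂P) ∂P

section Gen
variable {α : Type*} [MeasurableSpace α] {μ : Measure α}

lemma integrable_of_sq [IsFiniteMeasure μ] {u : α → ℝ} (hu : AEStronglyMeasurable u μ)
    (h2 : Integrable (fun x => u x ^ 2) μ) : Integrable u μ := by
  refine Integrable.mono' ((h2.add (integrable_const 1)).div_const 2) hu ?_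
  refine Eventually.of_forall fun x => ?_
  have := sq_nonneg (|u x| - 1)
  have h1 : ‖u x‖ = |u x| := rfl
  rw [h1]
  simp only [Pi.add_apply]
  nlinarith [sq_abs (u x), abs_nonneg (u x)]

lemma integrable_mul_of_sq {u v : α → ℝ} (hu : AEStronglyMeasurable u μ)
    (hv : AEStronglyMeasurable v μ) (h2u : Integrable (fun x => u x ^ 2) μ)
    (h2v : Integrable (fun x => v x ^ 2) μ) :
    Integrable (fun x => u x * v x) μ := by
  refine Integrable.mono' ((h2u.add h2v).div_const 2) (hu.mul hv) ?_
  refine Eventually.of_forall fun x => ?_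
  have h1 : ‖u x * v x‖ = |u x| * |v x| := abs_mul _ _
  rw [h1]
  simp only [Pi.add_apply]
  nlinarith [sq_nonneg (|u x| - |v x|), sq_abs (u x), sq_abs (v x), abs_nonneg (u x),
    abs_nonneg (v x)]

lemma sq_integral_le [IsProbabilityMeasure μ] {φ : α → ℝ} (h1 : Integrable φ μ)
    (h2 : Integrable (fun x => φ x ^ 2) μ) :
    (∫ x, φ x ∂μ) ^ 2 ≤ ∫ x, φ x ^ 2 ∂μ := by
  set c := ∫ x, φ x ∂μ with hc
  have h0 : 0 ≤ ∫ x, (φ x - c) ^ 2 ∂μ := integral_nonneg fun x => sq_nonneg _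
  have hexp : ∫ x, (φ x - c) ^ 2 ∂μ = (∫ x, φ x ^ 2 ∂μ) - c ^ 2 := by
    have he : ∀ x, (φ x - c) ^ 2 = φ x ^ 2 - 2 * c * φ x + c * c := by intro x; ring
    simp_rw [he]
    have ia : Integrable (fun x => φ x ^ 2 - 2 * c * φ x) μ := h2.sub (h1.const_mul (2 * c))
    rw [integral_add ia (integrable_const (c * c)),
      integral_sub h2 (h1.const_mul (2 * c)), integral_const_mul, integral_const]
    simp only [probReal_univ, ENNReal.toReal_one, smul_eq_mul, one_mul]
    rw [← hc]; ring
  linarith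

lemma integral_comp_mp {β : Type*} [MeasurableSpace β] {ν : Measure β} {T : α → β}
    (mp : MeasurePreserving T μ ν) {h : β → ℝ} (hm : AEStronglyMeasurable h ν) :
    ∫ x, h (T x) ∂μ = ∫ y, h y ∂ν := by
  have h1 : ∫ y, h y ∂(Measure.map T μ) = ∫ x, h (T x) ∂μ :=
    integral_map mp.measurable.aemeasurable (by rwa [mp.map_eq])
  rw [← h1, mp.map_eq]

lemma integrable_comp_mp {β : Type*} [MeasurableSpace β] {ν : Measure β} {T : α → β}
    (mp : MeasurePreserving T μ ν) {h : β → ℝ} (hm : AEStronglyMeasurable h ν)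
    (hi : Integrable h ν) : Integrable (fun x => h (T x)) μ := by
  have := (integrable_map_measure (by rwa [mp.map_eq]) mp.measurable.aemeasurable).mp
    (by rwa [mp.map_eq])
  exact this

end Gen

section MixMP
set_option linter.unusedSectionVars false
variable {I : Type*} [Fintype I]

/-- Resample the coordinates in `s`. -/
noncomputable def mix (s : Set I) (y z : I → ℝ) : I → ℝ := fun i => if i ∈ s then z i else y i

lemma measurable_mix (s : Set I) :
    Measurable (fun p : (I → ℝ) × (I → ℝ) => mix s p.1 p.2) := by
  refine measurable_pi_lambda _ fun i => ?_
  by_cases h : i ∈ s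
  · simpa [mix, h, Function.comp_def] using (measurable_pi_apply i).comp (measurable_snd :
      Measurable fun p : (I → ℝ) × (I → ℝ) => p.2)
  · simpa [mix, h, Function.comp_def] using (measurable_pi_apply i).comp (measurable_fst :
      Measurable fun p : (I → ℝ) × (I → ℝ) => p.1)

lemma measurable_mix_right (s : Set I) (y : I → ℝ) : Measurable (fun z => mix s y z) :=
  (measurable_mix s).comp (measurable_const.prodMk measurable_id)

lemma mix_mix₁ (s : Set I) (y z : I → ℝ) : mix s (mix s y z) (mix s z y) = y := by
  funext i; by_cases h : i ∈ s <;> simp [mix, h]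

lemma mix_mix₂ (s : Set I) (y z w : I → ℝ) : mix s (mix s y z) w = mix s y w := by
  funext i; by_cases h : i ∈ s <;> simp [mix, h]

lemma mix_mix₃ {s s' : Set I} (hss : s ⊆ s') (y w z : I → ℝ) :
    mix s (mix (s' \ s) y w) z = mix s' y (mix s w z) := by
  funext i
  by_cases h1 : i ∈ s
  · simp [mix, h1, hss h1]
  · by_cases h2 : i ∈ s'
    · simp [mix, h1, h2, Set.mem_diff]
    · simp [mix, h1, h2, Set.mem_diff, fun h : i ∈ s' \ s => h2 h.1]

/-- The permutation of `I ⊕ I` swapping the two copies of each element of `s`. -/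
noncomputable def swapPerm (s : Set I) : I ⊕ I ≃ I ⊕ I where
  toFun j := Sum.elim (fun i => if i ∈ s then Sum.inr i else Sum.inl i)
    (fun i => if i ∈ s then Sum.inl i else Sum.inr i) j
  invFun j := Sum.elim (fun i => if i ∈ s then Sum.inr i else Sum.inl i)
    (fun i => if i ∈ s then Sum.inl i else Sum.inr i) j
  left_inv j := by rcases j with i | i <;> by_cases h : i ∈ s <;> simp [h]
  right_inv j := by rcases j with i | i <;> by_cases h : i ∈ s <;> simp [h]

lemma measurePreserving_comp_equiv {J : Type*} [Fintype J] (ρ : J → Measure ℝ)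
    [∀ j, IsProbabilityMeasure (ρ j)] (σ : J ≃ J) (hρ : ∀ j, ρ (σ j) = ρ j) :
    MeasurePreserving (fun x : J → ℝ => fun j => x (σ j)) (Measure.pi ρ) (Measure.pi ρ) := by
  have hmeas : Measurable (fun x : J → ℝ => fun j => x (σ j)) :=
    measurable_pi_lambda _ fun j => measurable_pi_apply _
  refine ⟨hmeas, ?_⟩
  refine (Measure.pi_eq fun A hA => ?_).symm
  rw [Measure.map_apply hmeas (MeasurableSet.univ_pi hA)]
  have hpre : (fun x : J → ℝ => fun j => x (σ j)) ⁻¹' (univ.pi A)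
      = univ.pi (fun j => A (σ.symm j)) := by
    ext x
    simp only [mem_preimage, Set.mem_pi, mem_univ, true_implies]
    constructor
    · intro h j; simpa using h (σ.symm j)
    · intro h j; simpa using h (σ j)
  rw [hpre, Measure.pi_pi]
  calc ∏ j, ρ j (A (σ.symm j)) = ∏ j, ρ (σ.symm j) (A (σ.symm j)) := by
        refine Finset.prod_congr rfl fun j _ => ?_
        have := hρ (σ.symm j); rw [Equiv.apply_symm_apply] at this; rw [this]
    _ = ∏ j, ρ j (A j) := Fintype.prod_equiv σ.symm _ _ fun j => rfl

variable (μ : I → Measure ℝ) [∀ i, IsProbabilityMeasure (μ i)]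

/-- The double family of measures on `I ⊕ I`. -/
noncomputable def ρ2 : I ⊕ I → Measure ℝ := fun j => μ (Sum.elim id id j)

instance : ∀ j, IsProbabilityMeasure (ρ2 μ j) := fun j => by
  rcases j with i | i <;> (show IsProbabilityMeasure (μ i); infer_instance)

lemma mpSum : MeasurePreserving (MeasurableEquiv.sumPiEquivProdPi fun _ : I ⊕ I => ℝ)
    (Measure.pi (ρ2 μ)) ((Measure.pi μ).prod (Measure.pi μ)) := by
  have h := measurePreserving_sumPiEquivProdPi (μ := ρ2 μ)
  exact h

lemma mpSumSymm :
    MeasurePreserving (MeasurableEquiv.sumPiEquivProdPi fun _ : I ⊕ I => ℝ).symm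
    ((Measure.pi μ).prod (Measure.pi μ)) (Measure.pi (ρ2 μ)) := by
  have h := measurePreserving_sumPiEquivProdPi_symm (μ := ρ2 μ)
  exact h

lemma hρ2swap (s : Set I) : ∀ j, ρ2 μ (swapPerm s j) = ρ2 μ j := fun j => by
  rcases j with i | i <;> by_cases h : i ∈ s <;> simp [swapPerm, ρ2, h]

lemma mpT (s : Set I) :
    MeasurePreserving (fun p : (I → ℝ) × (I → ℝ) => (mix s p.1 p.2, mix s p.2 p.1))
      ((Measure.pi μ).prod (Measure.pi μ)) ((Measure.pi μ).prod (Measure.pi μ)) := by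
  have h := ((mpSum μ).comp ((measurePreserving_comp_equiv (ρ2 μ) (swapPerm s)
      (hρ2swap μ s)).comp (mpSumSymm μ)))
  have hfun : ((MeasurableEquiv.sumPiEquivProdPi fun _ : I ⊕ I => ℝ) ∘
      (fun x : (I ⊕ I) → ℝ => fun j => x (swapPerm s j)) ∘
      (MeasurableEquiv.sumPiEquivProdPi fun _ : I ⊕ I => ℝ).symm)
      = fun p : (I → ℝ) × (I → ℝ) => (mix s p.1 p.2, mix s p.2 p.1) := by
    funext p
    refine Prod.ext ?_ ?_ <;> funext i <;>
      by_cases h : i ∈ s <;>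
      simp [MeasurableEquiv.sumPiEquivProdPi, Equiv.sumPiEquivProdPi, swapPerm, mix, h]
  rwa [hfun] at h

lemma mpFst : MeasurePreserving (Prod.fst : (I → ℝ) × (I → ℝ) → (I → ℝ))
    ((Measure.pi μ).prod (Measure.pi μ)) (Measure.pi μ) :=
  ⟨measurable_fst, by simp⟩

lemma mpSnd : MeasurePreserving (Prod.snd : (I → ℝ) × (I → ℝ) → (I → ℝ))
    ((Measure.pi μ).prod (Measure.pi μ)) (Measure.pi μ) :=
  ⟨measurable_snd, by simp⟩

lemma mpMix (s : Set I) :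
    MeasurePreserving (fun p : (I → ℝ) × (I → ℝ) => mix s p.1 p.2)
      ((Measure.pi μ).prod (Measure.pi μ)) (Measure.pi μ) :=
  (mpFst μ).comp (mpT μ s)

end MixMP

section Core
set_option linter.unusedSectionVars false
variable {I : Type*} [Fintype I] (μ : I → Measure ℝ) [∀ i, IsProbabilityMeasure (μ i)]
variable (f : (I → ℝ) → ℝ)

/-- Partial average of `f` over the coordinates in `s`. -/
noncomputable def gS (s : Set I) (y : I → ℝ) : ℝ := ∫ z, f (mix s y z) ∂(Measure.pi μ)

lemma stronglyMeasurable_gS (hf : Measurable f) (s : Set I) :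
    StronglyMeasurable (gS μ f s) := by
  have h := (hf.comp (measurable_mix s)).stronglyMeasurable.integral_prod_right'
    (ν := Measure.pi μ)
  exact h

lemma integrable_f_mix (hf : Measurable f) (hfi : Integrable f (Measure.pi μ)) (s : Set I) :
    Integrable (fun p : (I → ℝ) × (I → ℝ) => f (mix s p.1 p.2))
      ((Measure.pi μ).prod (Measure.pi μ)) :=
  integrable_comp_mp (mpMix μ s) hf.aestronglyMeasurable hfi

lemma integrable_f_mix_sq (hf : Measurable f)
    (hfsq : Integrable (fun y => f y ^ 2) (Measure.pi μ)) (s : Set I) :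
    Integrable (fun p : (I → ℝ) × (I → ℝ) => f (mix s p.1 p.2) ^ 2)
      ((Measure.pi μ).prod (Measure.pi μ)) :=
  integrable_comp_mp (mpMix μ s) (hf.pow_const 2).aestronglyMeasurable hfsq

lemma jensen_gS (hf : Measurable f) (hfi : Integrable f (Measure.pi μ))
    (hfsq : Integrable (fun y => f y ^ 2) (Measure.pi μ)) (s : Set I) :
    ∀ᵐ y ∂(Measure.pi μ),
      gS μ f s y ^ 2 ≤ ∫ z, f (mix s y z) ^ 2 ∂(Measure.pi μ) := by
  filter_upwards [(integrable_f_mix μ f hf hfi s).prod_right_ae,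
    (integrable_f_mix_sq μ f hf hfsq s).prod_right_ae] with y hy1 hy2
  exact sq_integral_le hy1 hy2

lemma integrable_gS_sq (hf : Measurable f) (hfi : Integrable f (Measure.pi μ))
    (hfsq : Integrable (fun y => f y ^ 2) (Measure.pi μ)) (s : Set I) :
    Integrable (fun y => gS μ f s y ^ 2) (Measure.pi μ) := by
  have hbdd : Integrable (fun y => ∫ z, f (mix s y z) ^ 2 ∂(Measure.pi μ)) (Measure.pi μ) :=
    (integrable_f_mix_sq μ f hf hfsq s).integral_prod_left
  refine Integrable.mono' hbdd
    (((stronglyMeasurable_gS μ f hf s).measurable.pow_const 2).aestronglyMeasurable) ?_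
  filter_upwards [jensen_gS μ f hf hfi hfsq s] with y hy
  rw [Real.norm_eq_abs, abs_of_nonneg (sq_nonneg _)]
  exact hy

lemma integrable_gS (hf : Measurable f) (hfi : Integrable f (Measure.pi μ))
    (hfsq : Integrable (fun y => f y ^ 2) (Measure.pi μ)) (s : Set I) :
    Integrable (gS μ f s) (Measure.pi μ) :=
  integrable_of_sq (stronglyMeasurable_gS μ f hf s).aestronglyMeasurable
    (integrable_gS_sq μ f hf hfi hfsq s)

lemma integrable_fst_mul_mix (hf : Measurable f)
    (hfsq : Integrable (fun y => f y ^ 2) (Measure.pi μ)) (t : Set I) :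
    Integrable (fun p : (I → ℝ) × (I → ℝ) => f p.1 * f (mix t p.1 p.2))
      ((Measure.pi μ).prod (Measure.pi μ)) :=
  integrable_mul_of_sq (hf.comp measurable_fst).aestronglyMeasurable
    (hf.comp (measurable_mix t)).aestronglyMeasurable
    (integrable_comp_mp (mpFst μ) (hf.pow_const 2).aestronglyMeasurable hfsq)
    (integrable_comp_mp (mpMix μ t) (hf.pow_const 2).aestronglyMeasurable hfsq)

lemma integral_f_mul_gS (hf : Measurable f) (hfi : Integrable f (Measure.pi μ))
    (hfsq : Integrable (fun y => f y ^ 2) (Measure.pi μ)) (t : Set I) :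
    ∫ y, f y * gS μ f t y ∂(Measure.pi μ)
      = ∫ y, gS μ f t y ^ 2 ∂(Measure.pi μ) := by
  have mpa : MeasurePreserving
      (fun q : (I → ℝ) × ((I → ℝ) × (I → ℝ)) => ((q.1, q.2.1) : (I → ℝ) × (I → ℝ)))
      ((Measure.pi μ).prod ((Measure.pi μ).prod (Measure.pi μ)))
      ((Measure.pi μ).prod (Measure.pi μ)) :=
    (MeasurePreserving.id (Measure.pi μ)).prod (mpFst μ)
  have mpb : MeasurePreserving
      (fun q : (I → ℝ) × ((I → ℝ) × (I → ℝ)) => ((q.1, q.2.2) : (I → ℝ) × (I → ℝ)))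
      ((Measure.pi μ).prod ((Measure.pi μ).prod (Measure.pi μ)))
      ((Measure.pi μ).prod (Measure.pi μ)) :=
    (MeasurePreserving.id (Measure.pi μ)).prod (mpSnd μ)
  have mpc1 : MeasurePreserving
      (fun q : (I → ℝ) × ((I → ℝ) × (I → ℝ)) => mix t q.1 q.2.1)
      ((Measure.pi μ).prod ((Measure.pi μ).prod (Measure.pi μ))) (Measure.pi μ) :=
    (mpMix μ t).comp mpa
  have mpc2 : MeasurePreserving
      (fun q : (I → ℝ) × ((I → ℝ) × (I → ℝ)) => mix t q.1 q.2.2)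
      ((Measure.pi μ).prod ((Measure.pi μ).prod (Measure.pi μ))) (Measure.pi μ) :=
    (mpMix μ t).comp mpb
  have hK : Integrable
      (fun q : (I → ℝ) × ((I → ℝ) × (I → ℝ)) => f (mix t q.1 q.2.1) * f (mix t q.1 q.2.2))
      ((Measure.pi μ).prod ((Measure.pi μ).prod (Measure.pi μ))) :=
    integrable_mul_of_sq (hf.comp mpc1.measurable).aestronglyMeasurable
      (hf.comp mpc2.measurable).aestronglyMeasurable
      (integrable_comp_mp mpc1 (hf.pow_const 2).aestronglyMeasurable hfsq)
      (integrable_comp_mp mpc2 (hf.pow_const 2).aestronglyMeasurable hfsq)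
  have hA : ∫ q, f (mix t q.1 q.2.1) * f (mix t q.1 q.2.2)
        ∂((Measure.pi μ).prod ((Measure.pi μ).prod (Measure.pi μ)))
      = ∫ y, gS μ f t y ^ 2 ∂(Measure.pi μ) := by
    rw [integral_prod _ hK]
    refine integral_congr_ae (Eventually.of_forall fun y => ?_)
    dsimp only
    have h := integral_prod_mul (μ := Measure.pi μ) (ν := Measure.pi μ)
      (f := fun z => f (mix t y z)) (g := fun w => f (mix t y w))
    rw [h, pow_two]
    rfl
  have hR : MeasurePreserving
      (fun q : (I → ℝ) × ((I → ℝ) × (I → ℝ)) =>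
        ((mix t q.1 q.2.1, (mix t q.2.1 q.1, q.2.2)) : (I → ℝ) × ((I → ℝ) × (I → ℝ))))
      ((Measure.pi μ).prod ((Measure.pi μ).prod (Measure.pi μ)))
      ((Measure.pi μ).prod ((Measure.pi μ).prod (Measure.pi μ))) := by
    have h1 := (measurePreserving_prodAssoc (Measure.pi μ) (Measure.pi μ) (Measure.pi μ)).comp
      (((mpT μ t).prod (MeasurePreserving.id (Measure.pi μ))).comp
        (measurePreserving_prodAssoc (Measure.pi μ) (Measure.pi μ) (Measure.pi μ)).symm)
    exact h1
  have hB : ∫ q, f (mix t q.1 q.2.1) * f (mix t q.1 q.2.2)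
        ∂((Measure.pi μ).prod ((Measure.pi μ).prod (Measure.pi μ)))
      = ∫ y, f y * gS μ f t y ∂(Measure.pi μ) := by
    have h3 := integral_comp_mp hR
      (h := fun q : (I → ℝ) × ((I → ℝ) × (I → ℝ)) =>
        f (mix t q.1 q.2.1) * f (mix t q.1 q.2.2)) hK.aestronglyMeasurable
    have h2 : ∫ q, f (mix t q.1 q.2.1) * f (mix t q.1 q.2.2)
          ∂((Measure.pi μ).prod ((Measure.pi μ).prod (Measure.pi μ)))
        = ∫ q, f q.1 * f (mix t q.1 q.2.2)
          ∂((Measure.pi μ).prod ((Measure.pi μ).prod (Measure.pi μ))) := by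
      rw [← h3]
      refine integral_congr_ae (Eventually.of_forall fun q => ?_)
      dsimp only
      rw [mix_mix₁, mix_mix₂]
    rw [h2]
    have hH : Integrable (fun p : (I → ℝ) × (I → ℝ) => f p.1 * f (mix t p.1 p.2))
        ((Measure.pi μ).prod (Measure.pi μ)) := integrable_fst_mul_mix μ f hf hfsq t
    have h4 := integral_comp_mp mpb
      (h := fun p : (I → ℝ) × (I → ℝ) => f p.1 * f (mix t p.1 p.2)) hH.aestronglyMeasurable
    have h5 : ∫ p : (I → ℝ) × (I → ℝ), f p.1 * f (mix t p.1 p.2)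
          ∂((Measure.pi μ).prod (Measure.pi μ))
        = ∫ y, f y * gS μ f t y ∂(Measure.pi μ) := by
      rw [integral_prod _ hH]
      refine integral_congr_ae (Eventually.of_forall fun y => ?_)
      dsimp only
      exact integral_const_mul _ _
    exact h4.trans h5
  exact hB.symm.trans hA

end Core

section Core2
set_option linter.unusedSectionVars false
variable {I : Type*} [Fintype I] (μ : I → Measure ℝ) [∀ i, IsProbabilityMeasure (μ i)]
variable (f : (I → ℝ) → ℝ)

lemma integral_gS_sq_mono (hf : Measurable f) (hfi : Integrable f (Measure.pi μ))
    (hfsq : Integrable (fun y => f y ^ 2) (Measure.pi μ)) {s s' : Set I} (hss : s ⊆ s') :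
    ∫ y, gS μ f s' y ^ 2 ∂(Measure.pi μ) ≤ ∫ y, gS μ f s y ^ 2 ∂(Measure.pi μ) := by
  have mpe : MeasurePreserving
      (fun q : (I → ℝ) × ((I → ℝ) × (I → ℝ)) =>
        ((mix (s' \ s) q.1 q.2.1, q.2.2) : (I → ℝ) × (I → ℝ)))
      ((Measure.pi μ).prod ((Measure.pi μ).prod (Measure.pi μ)))
      ((Measure.pi μ).prod (Measure.pi μ)) := by
    have h1 := ((mpMix μ (s' \ s)).prod (MeasurePreserving.id (Measure.pi μ))).comp
      (measurePreserving_prodAssoc (Measure.pi μ) (Measure.pi μ) (Measure.pi μ)).symm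
    exact h1
  have mpd : MeasurePreserving
      (fun q : (I → ℝ) × ((I → ℝ) × (I → ℝ)) => mix s (mix (s' \ s) q.1 q.2.1) q.2.2)
      ((Measure.pi μ).prod ((Measure.pi μ).prod (Measure.pi μ))) (Measure.pi μ) :=
    (mpMix μ s).comp mpe
  have hK2 : Integrable
      (fun q : (I → ℝ) × ((I → ℝ) × (I → ℝ)) => f (mix s (mix (s' \ s) q.1 q.2.1) q.2.2))
      ((Measure.pi μ).prod ((Measure.pi μ).prod (Measure.pi μ))) :=
    integrable_comp_mp mpd hf.aestronglyMeasurable hfi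
  have h1 : ∀ y, gS μ f s' y
      = ∫ q : (I → ℝ) × (I → ℝ), f (mix s (mix (s' \ s) y q.1) q.2)
          ∂((Measure.pi μ).prod (Measure.pi μ)) := by
    intro y
    have hcv := integral_comp_mp (mpMix μ s) (h := fun u => f (mix s' y u))
      (hf.comp (measurable_mix_right s' y)).aestronglyMeasurable
    rw [show gS μ f s' y = ∫ u, f (mix s' y u) ∂(Measure.pi μ) from rfl, ← hcv]
    refine integral_congr_ae (Eventually.of_forall fun q => ?_)
    dsimp only
    rw [← mix_mix₃ hss]
  have h2 : ∀ᵐ y ∂(Measure.pi μ),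
      gS μ f s' y = ∫ w, gS μ f s (mix (s' \ s) y w) ∂(Measure.pi μ) := by
    filter_upwards [hK2.prod_right_ae] with y hy
    rw [h1 y, integral_prod _ hy]
    rfl
  have h3sq : Integrable
      (fun p : (I → ℝ) × (I → ℝ) => gS μ f s (mix (s' \ s) p.1 p.2) ^ 2)
      ((Measure.pi μ).prod (Measure.pi μ)) :=
    integrable_comp_mp (mpMix μ (s' \ s))
      (((stronglyMeasurable_gS μ f hf s).measurable.pow_const 2).aestronglyMeasurable)
      (integrable_gS_sq μ f hf hfi hfsq s)
  have h31 : Integrable (fun p : (I → ℝ) × (I → ℝ) => gS μ f s (mix (s' \ s) p.1 p.2))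
      ((Measure.pi μ).prod (Measure.pi μ)) :=
    integrable_comp_mp (mpMix μ (s' \ s))
      (stronglyMeasurable_gS μ f hf s).aestronglyMeasurable
      (integrable_gS μ f hf hfi hfsq s)
  have h4 : ∀ᵐ y ∂(Measure.pi μ),
      gS μ f s' y ^ 2 ≤ ∫ w, gS μ f s (mix (s' \ s) y w) ^ 2 ∂(Measure.pi μ) := by
    filter_upwards [h2, h3sq.prod_right_ae, h31.prod_right_ae] with y hy hsq h1i
    rw [hy]
    exact sq_integral_le h1i hsq
  have h5 : ∫ y, gS μ f s' y ^ 2 ∂(Measure.pi μ)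
      ≤ ∫ y, ∫ w, gS μ f s (mix (s' \ s) y w) ^ 2 ∂(Measure.pi μ) ∂(Measure.pi μ) :=
    integral_mono_ae (integrable_gS_sq μ f hf hfi hfsq s') h3sq.integral_prod_left h4
  have h6 : ∫ y, ∫ w, gS μ f s (mix (s' \ s) y w) ^ 2 ∂(Measure.pi μ) ∂(Measure.pi μ)
      = ∫ y, gS μ f s y ^ 2 ∂(Measure.pi μ) := by
    rw [← integral_prod _ h3sq]
    exact integral_comp_mp (mpMix μ (s' \ s)) (h := fun u => gS μ f s u ^ 2)
      (((stronglyMeasurable_gS μ f hf s).measurable.pow_const 2).aestronglyMeasurable)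
  linarith

lemma key_repr (hf : Measurable f) (hfi : Integrable f (Measure.pi μ))
    (hfsq : Integrable (fun y => f y ^ 2) (Measure.pi μ)) (t : Set I) :
    ∫ p : (I → ℝ) × (I → ℝ), f p.1 * f (mix t p.1 p.2) ∂((Measure.pi μ).prod (Measure.pi μ))
      = ∫ y, gS μ f t y ^ 2 ∂(Measure.pi μ) := by
  rw [integral_prod _ (integrable_fst_mul_mix μ f hf hfsq t)]
  have h : ∫ y, (∫ z, f y * f (mix t y z) ∂(Measure.pi μ)) ∂(Measure.pi μ)
      = ∫ y, f y * gS μ f t y ∂(Measure.pi μ) := by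
    refine integral_congr_ae (Eventually.of_forall fun y => ?_)
    dsimp only
    exact integral_const_mul _ _
  rw [h]
  exact integral_f_mul_gS μ f hf hfi hfsq t

lemma core_mono (hf : Measurable f) (hfi : Integrable f (Measure.pi μ))
    (hfsq : Integrable (fun y => f y ^ 2) (Measure.pi μ)) {s s' : Set I} (hss : s ⊆ s') :
    ∫ p : (I → ℝ) × (I → ℝ), f p.1 * f (mix s' p.1 p.2) ∂((Measure.pi μ).prod (Measure.pi μ))
      ≤ ∫ p : (I → ℝ) × (I → ℝ), f p.1 * f (mix s p.1 p.2)
          ∂((Measure.pi μ).prod (Measure.pi μ)) := by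
  rw [key_repr μ f hf hfi hfsq s, key_repr μ f hf hfi hfsq s']
  exact integral_gS_sq_mono μ f hf hfi hfsq hss

lemma integral_f_mix_eq (hf : Measurable f) (t : Set I) :
    ∫ p : (I → ℝ) × (I → ℝ), f (mix t p.1 p.2) ∂((Measure.pi μ).prod (Measure.pi μ))
      = ∫ y, f y ∂(Measure.pi μ) :=
  integral_comp_mp (mpMix μ t) hf.aestronglyMeasurable

end Core2

lemma cov_eq {Ω : Type*} [MeasurableSpace Ω] (P : Measure Ω) [IsProbabilityMeasure P]
    {X W : Ω → ℝ} (hX : Integrable X P) (hW : Integrable W P)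
    (hXW : Integrable (fun a => X a * W a) P) :
    cov P X W = (∫ a, X a * W a ∂P) - (∫ a, X a ∂P) * (∫ a, W a ∂P) := by
  have he : ∀ a, (X a - ∫ b, X b ∂P) * (W a - ∫ b, W b ∂P)
      = X a * W a - (∫ b, X b ∂P) * W a - (∫ b, W b ∂P) * X a
        + (∫ b, X b ∂P) * (∫ b, W b ∂P) := fun a => by ring
  rw [cov]
  simp_rw [he]
  have i1 : Integrable (fun a => X a * W a - (∫ b, X b ∂P) * W a) P :=
    hXW.sub (hW.const_mul _)
  have i2 : Integrable
      (fun a => X a * W a - (∫ b, X b ∂P) * W a - (∫ b, W b ∂P) * X a) P :=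
    i1.sub (hX.const_mul _)
  rw [integral_add i2 (integrable_const _), integral_sub i1 (hX.const_mul _),
    integral_sub hXW (hW.const_mul _), integral_const_mul, integral_const_mul, integral_const]
  simp only [probReal_univ, ENNReal.toReal_one, smul_eq_mul, one_mul]
  ring


/-- **Lemma 6.1: covariance decreases when more coordinates are resampled.**
Let `I` be a finite set, `Y = (Y_i)_{i ∈ I}` and `Y' = (Y'_i)_{i ∈ I}` two independent
vectors of independent real random variables with `Y'_i` equal in distribution to `Y_i`
for each `i`, and for a (random) subset `S ⊆ I` let `Y^S` be obtained from `Y` by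
replacing `Y_i` by `Y'_i` for `i ∈ S`.  Let `f : ℝ^I → ℝ` be measurable with
`𝔼[f(Y)²] < ∞`, and let `𝒮, 𝒮̃` be random subsets of `I`, independent of `(Y, Y')`,
with `𝒮 ⊆ 𝒮̃` almost surely.  Then
`Cov(f(Y), f(Y^𝒮)) ≥ Cov(f(Y), f(Y^𝒮̃))`. -/
theorem covariance_monotone_resampling
    {Ω : Type*} [MeasurableSpace Ω] (P : Measure Ω) [IsProbabilityMeasure P]
    {I : Type*} [Fintype I]
    (Y Y' : I → Ω → ℝ)
    (hmY : ∀ i, Measurable (Y i)) (hmY' : ∀ i, Measurable (Y' i))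
    (hindep : iIndepFun (Sum.elim Y Y') P)
    (hident : ∀ i, P.map (Y' i) = P.map (Y i))
    (S S' : Ω → Set I)
    (hmS : Measurable S) (hmS' : Measurable S')
    (hSindep : IndepFun (fun a => (S a, S' a))
      (fun a => fun j : I ⊕ I => Sum.elim (fun i => Y i a) (fun i => Y' i a) j) P)
    (hsub : ∀ᵐ a ∂P, S a ⊆ S' a)
    (f : (I → ℝ) → ℝ) (hf : Measurable f)
    (hf2 : MemLp (fun a => f (fun i => Y i a)) 2 P) :
    cov P (fun a => f (fun i => Y i a))
        (fun a => f (fun i => if i ∈ S a then Y' i a else Y i a)) ≥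
      cov P (fun a => f (fun i => Y i a))
        (fun a => f (fun i => if i ∈ S' a then Y' i a else Y i a)) := by
  -- basic measurability and laws
  set μ0 : I → Measure ℝ := fun i => P.map (Y i) with hμ0
  haveI : ∀ i, IsProbabilityMeasure (μ0 i) :=
    fun i => Measure.isProbabilityMeasure_map (hmY i).aemeasurable
  set Z : Ω → (I ⊕ I) → ℝ :=
    fun a => fun j : I ⊕ I => Sum.elim (fun i => Y i a) (fun i => Y' i a) j with hZdef
  have melim : ∀ j : I ⊕ I, Measurable (Sum.elim Y Y' j) := by
    rintro (i | i)
    exacts [hmY i, hmY' i]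
  have mZ : Measurable Z := by
    refine measurable_pi_lambda _ fun j => ?_
    rcases j with i | i
    · exact hmY i
    · exact hmY' i
  set ρ3 : I ⊕ I → Measure ℝ := fun j => P.map (Sum.elim Y Y' j) with hρ3
  haveI hρ3prob : ∀ j, IsProbabilityMeasure (ρ3 j) :=
    fun j => Measure.isProbabilityMeasure_map (melim j).aemeasurable
  have hpi3 : Measure.pi ρ3 = Measure.pi (ρ2 μ0) := by
    congr 1
    funext j
    rcases j with i | i
    · rfl
    · exact hident i
  haveI : IsProbabilityMeasure (Measure.pi ρ3) := Measure.pi.instIsProbabilityMeasure ρ3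
  have hZlaw : P.map Z = Measure.pi ρ3 := by
    refine (Measure.pi_eq fun A hA => ?_).symm
    rw [Measure.map_apply mZ (MeasurableSet.univ_pi hA)]
    have hpre : Z ⁻¹' (univ.pi A) = ⋂ j, Sum.elim Y Y' j ⁻¹' A j := by
      ext a
      simp only [mem_preimage, Set.mem_pi, mem_univ, true_implies, mem_iInter]
      constructor
      · intro h j
        rcases j with i | i
        · exact h (Sum.inl i)
        · exact h (Sum.inr i)
      · intro h j
        rcases j with i | i
        · exact h (Sum.inl i)
        · exact h (Sum.inr i)
    rw [hpre, hindep.meas_iInter fun j => ⟨A j, hA j, rfl⟩]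
    exact Finset.prod_congr rfl fun j _ => (Measure.map_apply (melim j) (hA j)).symm
  -- the joint law of the random sets and the randomness
  set κ : Measure (Set I × Set I) := P.map (fun a => (S a, S' a)) with hκ
  have mSS : Measurable fun a => (S a, S' a) := hmS.prodMk hmS'
  haveI : IsProbabilityMeasure κ := Measure.isProbabilityMeasure_map mSS.aemeasurable
  set θ : Ω → (Set I × Set I) × ((I ⊕ I) → ℝ) := fun a => ((S a, S' a), Z a) with hθdef
  have mθ : Measurable θ := mSS.prodMk mZ
  have hθlaw : P.map θ = κ.prod (Measure.pi ρ3) := by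
    have h := (indepFun_iff_map_prod_eq_prod_map_map mSS.aemeasurable mZ.aemeasurable).mp hSindep
    rw [hZlaw] at h
    exact h
  have mpθ : MeasurePreserving θ P (κ.prod (Measure.pi ρ3)) := ⟨mθ, hθlaw⟩
  -- the resampling maps
  set φ : Set I → ((I ⊕ I) → ℝ) → (I → ℝ) :=
    fun s x => fun i => if i ∈ s then x (Sum.inr i) else x (Sum.inl i) with hφdef
  have mφ : ∀ s, Measurable (φ s) := by
    intro s
    refine measurable_pi_lambda _ fun i => ?_
    by_cases h : i ∈ s <;> simp only [hφdef, h, if_true, if_false] <;>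
      exact measurable_pi_apply _
  have mpφ : ∀ s : Set I, MeasurePreserving (φ s) (Measure.pi ρ3) (Measure.pi μ0) := by
    intro s
    rw [hpi3]
    have h1 := (mpMix μ0 s).comp (mpSum μ0)
    have hfun : ((fun p : (I → ℝ) × (I → ℝ) => mix s p.1 p.2) ∘
        ⇑(MeasurableEquiv.sumPiEquivProdPi fun _ : I ⊕ I => ℝ)) = φ s := by
      funext x
      funext i
      by_cases h : i ∈ s <;>
        simp [MeasurableEquiv.sumPiEquivProdPi, Equiv.sumPiEquivProdPi, mix, hφdef, h]
    rwa [hfun] at h1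
  have mφ0 : Measurable (fun x : (I ⊕ I) → ℝ => (fun i => x (Sum.inl i) : I → ℝ)) :=
    measurable_pi_lambda _ fun i => measurable_pi_apply _
  have mpφ0 : MeasurePreserving (fun x : (I ⊕ I) → ℝ => (fun i => x (Sum.inl i) : I → ℝ))
      (Measure.pi ρ3) (Measure.pi μ0) := by
    rw [hpi3]
    have h1 := (mpFst μ0).comp (mpSum μ0)
    have hfun : ((Prod.fst : (I → ℝ) × (I → ℝ) → (I → ℝ)) ∘
        ⇑(MeasurableEquiv.sumPiEquivProdPi fun _ : I ⊕ I => ℝ))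
        = fun x : (I ⊕ I) → ℝ => (fun i => x (Sum.inl i) : I → ℝ) := by
      funext x
      simp [MeasurableEquiv.sumPiEquivProdPi, Equiv.sumPiEquivProdPi]
    rwa [hfun] at h1
  -- f is square integrable for the product law
  have mpYvec : MeasurePreserving (fun a => (fun i => Y i a : I → ℝ)) P (Measure.pi μ0) := by
    refine ⟨measurable_pi_lambda _ fun i => hmY i, ?_⟩
    have hcomp : (fun a => (fun i => Y i a : I → ℝ))
        = (fun x : (I ⊕ I) → ℝ => (fun i => x (Sum.inl i) : I → ℝ)) ∘ Z := rfl
    rw [hcomp, ← Measure.map_map mpφ0.measurable mZ, hZlaw, mpφ0.map_eq]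
  have hfL2 : MemLp f 2 (Measure.pi μ0) := by
    have h := (memLp_map_measure_iff hf.aestronglyMeasurable
      mpYvec.measurable.aemeasurable).mpr hf2
    rwa [mpYvec.map_eq] at h
  have hfi : Integrable f (Measure.pi μ0) := hfL2.integrable one_le_two
  have hfsq : Integrable (fun y => f y ^ 2) (Measure.pi μ0) := hfL2.integrable_sq
  -- random variables on the canonical space
  have mpsnd2 : MeasurePreserving (Prod.snd : (Set I × Set I) × ((I ⊕ I) → ℝ) → ((I ⊕ I) → ℝ))
      (κ.prod (Measure.pi ρ3)) (Measure.pi ρ3) := ⟨measurable_snd, by simp⟩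
  have mpX0 : MeasurePreserving
      (fun w : (Set I × Set I) × ((I ⊕ I) → ℝ) => (fun i => w.2 (Sum.inl i) : I → ℝ))
      (κ.prod (Measure.pi ρ3)) (Measure.pi μ0) := mpφ0.comp mpsnd2
  have hX0i : Integrable (fun w : (Set I × Set I) × ((I ⊕ I) → ℝ) => f (fun i => w.2 (Sum.inl i)))
      (κ.prod (Measure.pi ρ3)) := integrable_comp_mp mpX0 hf.aestronglyMeasurable hfi
  have hX0sq : Integrable
      (fun w : (Set I × Set I) × ((I ⊕ I) → ℝ) => f (fun i => w.2 (Sum.inl i)) ^ 2)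
      (κ.prod (Measure.pi ρ3)) :=
    integrable_comp_mp mpX0 (hf.pow_const 2).aestronglyMeasurable hfsq
  have e0 : ∫ w : (Set I × Set I) × ((I ⊕ I) → ℝ), f (fun i => w.2 (Sum.inl i))
      ∂(κ.prod (Measure.pi ρ3)) = ∫ y, f y ∂(Measure.pi μ0) :=
    integral_comp_mp mpX0 hf.aestronglyMeasurable
  -- measurability in the set coordinate
  have mX : ∀ g : Set I × Set I → Set I,
      Measurable fun w : (Set I × Set I) × ((I ⊕ I) → ℝ) => f (φ (g w.1) w.2) := by
    intro g
    have h1 : Measurable fun w : ((I ⊕ I) → ℝ) × (Set I × Set I) => f (φ (g w.2) w.1) :=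
      measurable_from_prod_countable_left fun p => hf.comp (mφ (g p))
    exact h1.comp (measurable_snd.prodMk measurable_fst)
  have hXsq : ∀ g : Set I × Set I → Set I,
      Integrable (fun w : (Set I × Set I) × ((I ⊕ I) → ℝ) => f (φ (g w.1) w.2) ^ 2)
        (κ.prod (Measure.pi ρ3)) := by
    intro g
    refine (integrable_prod_iff ((mX g).pow_const 2).aestronglyMeasurable).mpr ⟨?_, ?_⟩
    · refine Eventually.of_forall fun p => ?_
      exact integrable_comp_mp (mpφ (g p)) (hf.pow_const 2).aestronglyMeasurable hfsq
    · have hb : (fun p : Set I × Set I =>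
          ∫ x, ‖f (φ (g p) x) ^ 2‖ ∂(Measure.pi ρ3))
          = fun _ => ∫ y, ‖f y ^ 2‖ ∂(Measure.pi μ0) := by
        funext p
        exact integral_comp_mp (mpφ (g p)) (h := fun y => ‖f y ^ 2‖)
          ((hf.pow_const 2).norm).aestronglyMeasurable
      rw [hb]
      exact integrable_const _
  have hXi : ∀ g : Set I × Set I → Set I,
      Integrable (fun w : (Set I × Set I) × ((I ⊕ I) → ℝ) => f (φ (g w.1) w.2))
        (κ.prod (Measure.pi ρ3)) :=
    fun g => integrable_of_sq (mX g).aestronglyMeasurable (hXsq g)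
  -- products are integrable
  have hprod : ∀ g : Set I × Set I → Set I,
      Integrable (fun w : (Set I × Set I) × ((I ⊕ I) → ℝ) =>
        f (fun i => w.2 (Sum.inl i)) * f (φ (g w.1) w.2)) (κ.prod (Measure.pi ρ3)) :=
    fun g => integrable_mul_of_sq (hf.comp mpX0.measurable).aestronglyMeasurable
      (mX g).aestronglyMeasurable hX0sq (hXsq g)
  -- means
  have emean : ∀ g : Set I × Set I → Set I,
      ∫ w : (Set I × Set I) × ((I ⊕ I) → ℝ), f (φ (g w.1) w.2) ∂(κ.prod (Measure.pi ρ3))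
        = ∫ y, f y ∂(Measure.pi μ0) := by
    intro g
    rw [integral_prod _ (hXi g)]
    have hb : (fun p : Set I × Set I => ∫ x, f (φ (g p) x) ∂(Measure.pi ρ3))
        = fun _ => ∫ y, f y ∂(Measure.pi μ0) := by
      funext p
      exact integral_comp_mp (mpφ (g p)) hf.aestronglyMeasurable
    rw [hb, integral_const]
    simp [measure_univ]
  -- reduction of the slice integrals to the product space
  have hJ : ∀ s : Set I,
      ∫ x, f (fun i => x (Sum.inl i)) * f (φ s x) ∂(Measure.pi ρ3)
        = ∫ q : (I → ℝ) × (I → ℝ), f q.1 * f (mix s q.1 q.2)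
            ∂((Measure.pi μ0).prod (Measure.pi μ0)) := by
    intro s
    rw [hpi3]
    have hm : AEStronglyMeasurable (fun x : (I ⊕ I) → ℝ =>
        f (fun i => x (Sum.inl i)) * f (φ s x)) (Measure.pi (ρ2 μ0)) :=
      ((hf.comp mφ0).mul (hf.comp (mφ s))).aestronglyMeasurable
    have h := integral_comp_mp (mpSumSymm μ0)
      (h := fun x : (I ⊕ I) → ℝ => f (fun i => x (Sum.inl i)) * f (φ s x)) hm
    rw [← h]
    refine integral_congr_ae (Eventually.of_forall fun q => ?_)
    have e1 : (fun i => ((MeasurableEquiv.sumPiEquivProdPi fun _ : I ⊕ I => ℝ).symm q)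
        (Sum.inl i) : I → ℝ) = q.1 := by
      funext i
      simp [MeasurableEquiv.sumPiEquivProdPi, Equiv.sumPiEquivProdPi]
    have e2 : φ s ((MeasurableEquiv.sumPiEquivProdPi fun _ : I ⊕ I => ℝ).symm q)
        = mix s q.1 q.2 := by
      funext i
      by_cases hi : i ∈ s <;>
        simp [MeasurableEquiv.sumPiEquivProdPi, Equiv.sumPiEquivProdPi, hφdef, mix, hi]
    dsimp only
    rw [e1, e2]
  -- the key comparison of the two product moments
  have hsubκ : ∀ᵐ p ∂κ, p.1 ⊆ p.2 := by
    rw [hκ, ae_map_iff mSS.aemeasurable ((Set.to_countable _).measurableSet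
      (s := {p : Set I × Set I | p.1 ⊆ p.2}))]
    exact hsub
  have hmono : ∫ w : (Set I × Set I) × ((I ⊕ I) → ℝ),
        f (fun i => w.2 (Sum.inl i)) * f (φ w.1.2 w.2) ∂(κ.prod (Measure.pi ρ3))
      ≤ ∫ w : (Set I × Set I) × ((I ⊕ I) → ℝ),
        f (fun i => w.2 (Sum.inl i)) * f (φ w.1.1 w.2) ∂(κ.prod (Measure.pi ρ3)) := by
    rw [integral_prod _ (hprod Prod.snd), integral_prod _ (hprod Prod.fst)]
    refine integral_mono_ae (hprod Prod.snd).integral_prod_left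
      (hprod Prod.fst).integral_prod_left ?_
    filter_upwards [hsubκ] with p hp
    calc ∫ x, f (fun i => x (Sum.inl i)) * f (φ p.2 x) ∂(Measure.pi ρ3)
        = ∫ q : (I → ℝ) × (I → ℝ), f q.1 * f (mix p.2 q.1 q.2)
            ∂((Measure.pi μ0).prod (Measure.pi μ0)) := hJ p.2
      _ ≤ ∫ q : (I → ℝ) × (I → ℝ), f q.1 * f (mix p.1 q.1 q.2)
            ∂((Measure.pi μ0).prod (Measure.pi μ0)) :=
          core_mono μ0 f hf hfi hfsq hp
      _ = ∫ x, f (fun i => x (Sum.inl i)) * f (φ p.1 x) ∂(Measure.pi ρ3) := (hJ p.1).symm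
  -- identification of the four random variables
  have hA : (fun a => f (fun i => Y i a)) = fun a =>
      (fun w : (Set I × Set I) × ((I ⊕ I) → ℝ) => f (fun i => w.2 (Sum.inl i))) (θ a) := rfl
  have hB1 : (fun a => f (fun i => if i ∈ S a then Y' i a else Y i a)) = fun a =>
      (fun w : (Set I × Set I) × ((I ⊕ I) → ℝ) => f (φ w.1.1 w.2)) (θ a) := rfl
  have hB2 : (fun a => f (fun i => if i ∈ S' a then Y' i a else Y i a)) = fun a =>
      (fun w : (Set I × Set I) × ((I ⊕ I) → ℝ) => f (φ w.1.2 w.2)) (θ a) := rfl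
  -- integrability on Ω
  have hAint : Integrable (fun a => f (fun i => Y i a)) P := by
    rw [hA]; exact integrable_comp_mp mpθ (hf.comp mpX0.measurable).aestronglyMeasurable hX0i
  have hB1int : Integrable (fun a => f (fun i => if i ∈ S a then Y' i a else Y i a)) P := by
    rw [hB1]; exact integrable_comp_mp mpθ (mX Prod.fst).aestronglyMeasurable (hXi Prod.fst)
  have hB2int : Integrable (fun a => f (fun i => if i ∈ S' a then Y' i a else Y i a)) P := by
    rw [hB2]; exact integrable_comp_mp mpθ (mX Prod.snd).aestronglyMeasurable (hXi Prod.snd)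
  have hAB1int : Integrable (fun a => f (fun i => Y i a)
      * f (fun i => if i ∈ S a then Y' i a else Y i a)) P := by
    have h : (fun a => f (fun i => Y i a) * f (fun i => if i ∈ S a then Y' i a else Y i a))
        = fun a => (fun w : (Set I × Set I) × ((I ⊕ I) → ℝ) =>
            f (fun i => w.2 (Sum.inl i)) * f (φ w.1.1 w.2)) (θ a) := rfl
    rw [h]
    exact integrable_comp_mp mpθ ((hf.comp mpX0.measurable).mul (mX Prod.fst)).aestronglyMeasurable
      (hprod Prod.fst)
  have hAB2int : Integrable (fun a => f (fun i => Y i a)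
      * f (fun i => if i ∈ S' a then Y' i a else Y i a)) P := by
    have h : (fun a => f (fun i => Y i a) * f (fun i => if i ∈ S' a then Y' i a else Y i a))
        = fun a => (fun w : (Set I × Set I) × ((I ⊕ I) → ℝ) =>
            f (fun i => w.2 (Sum.inl i)) * f (φ w.1.2 w.2)) (θ a) := rfl
    rw [h]
    exact integrable_comp_mp mpθ ((hf.comp mpX0.measurable).mul (mX Prod.snd)).aestronglyMeasurable
      (hprod Prod.snd)
  -- transfer the integrals
  have tA : ∫ a, f (fun i => Y i a) ∂P = ∫ y, f y ∂(Measure.pi μ0) := by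
    rw [hA, integral_comp_mp mpθ
      (h := fun w : (Set I × Set I) × ((I ⊕ I) → ℝ) => f (fun i => w.2 (Sum.inl i)))
      (hf.comp mpX0.measurable).aestronglyMeasurable, e0]
  have tB1 : ∫ a, f (fun i => if i ∈ S a then Y' i a else Y i a) ∂P
      = ∫ y, f y ∂(Measure.pi μ0) := by
    rw [hB1, integral_comp_mp mpθ
      (h := fun w : (Set I × Set I) × ((I ⊕ I) → ℝ) => f (φ w.1.1 w.2))
      (mX Prod.fst).aestronglyMeasurable, emean Prod.fst]
  have tB2 : ∫ a, f (fun i => if i ∈ S' a then Y' i a else Y i a) ∂P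
      = ∫ y, f y ∂(Measure.pi μ0) := by
    rw [hB2, integral_comp_mp mpθ
      (h := fun w : (Set I × Set I) × ((I ⊕ I) → ℝ) => f (φ w.1.2 w.2))
      (mX Prod.snd).aestronglyMeasurable, emean Prod.snd]
  have tAB1 : ∫ a, f (fun i => Y i a) * f (fun i => if i ∈ S a then Y' i a else Y i a) ∂P
      = ∫ w : (Set I × Set I) × ((I ⊕ I) → ℝ),
          f (fun i => w.2 (Sum.inl i)) * f (φ w.1.1 w.2) ∂(κ.prod (Measure.pi ρ3)) := by
    have h : (fun a => f (fun i => Y i a) * f (fun i => if i ∈ S a then Y' i a else Y i a))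
        = fun a => (fun w : (Set I × Set I) × ((I ⊕ I) → ℝ) =>
            f (fun i => w.2 (Sum.inl i)) * f (φ w.1.1 w.2)) (θ a) := rfl
    rw [h, integral_comp_mp mpθ
      (h := fun w : (Set I × Set I) × ((I ⊕ I) → ℝ) =>
        f (fun i => w.2 (Sum.inl i)) * f (φ w.1.1 w.2))
      ((hf.comp mpX0.measurable).mul (mX Prod.fst)).aestronglyMeasurable]
  have tAB2 : ∫ a, f (fun i => Y i a) * f (fun i => if i ∈ S' a then Y' i a else Y i a) ∂P
      = ∫ w : (Set I × Set I) × ((I ⊕ I) → ℝ),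
          f (fun i => w.2 (Sum.inl i)) * f (φ w.1.2 w.2) ∂(κ.prod (Measure.pi ρ3)) := by
    have h : (fun a => f (fun i => Y i a) * f (fun i => if i ∈ S' a then Y' i a else Y i a))
        = fun a => (fun w : (Set I × Set I) × ((I ⊕ I) → ℝ) =>
            f (fun i => w.2 (Sum.inl i)) * f (φ w.1.2 w.2)) (θ a) := rfl
    rw [h, integral_comp_mp mpθ
      (h := fun w : (Set I × Set I) × ((I ⊕ I) → ℝ) =>
        f (fun i => w.2 (Sum.inl i)) * f (φ w.1.2 w.2))
      ((hf.comp mpX0.measurable).mul (mX Prod.snd)).aestronglyMeasurable]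
  -- conclude
  rw [ge_iff_le, cov_eq P hAint hB1int hAB1int, cov_eq P hAint hB2int hAB2int,
    tA, tB1, tB2, tAB1, tAB2]
  exact sub_le_sub_right hmono _

end Stmt17
end

section
/- Monotonicity of geodesics with respect to boundary weights: fix u ≤ v in ℤ², bulk weights ω : ℤ² → [0,∞), and boundary weights ω^H_{u+i e₁} (1 ≤ i ≤ v₁−u₁) and ω^V_{u+j e₂} (1 ≤ j ≤ v₂−u₂) satisfying ω_{u+i e₁} ≤ ω^H_{u+i e₁} for all i and ω_{u+j e₂} ≤ ω^V_{u+j e₂} for all j. If the downmost boundary geodesic from u to v passes through u + e₁, then the downmost bulk geodesic π₋(u,v) is above the downmost boundary geodesic; symmetrically, if the upmost boundary geodesic from u to v passes through u + e₂, then the upmost boundary geodesic is above the upmost bulk geodesic π₊(u,v). -/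
open MeasureTheory Real Filter Set Topology

namespace Stmt18

/-- Vertices of the planar square lattice. -/
abbrev Vertex : Type := ℤ × ℤ

def e1 : Vertex := (1, 0)
def e2 : Vertex := (0, 1)

/-- `γ` is a directed (up-right) path from `u` to `v`: a nonempty list of vertices starting
at `u`, ending at `v`, and taking steps `e₁` or `e₂`. -/
def IsDirPath (u v : Vertex) (γ : List Vertex) : Prop :=
  γ ≠ [] ∧ γ.head? = some u ∧ γ.getLast? = some v ∧
    ∀ i : ℕ, (h : i + 1 < γ.length) →
      γ.get ⟨i + 1, h⟩ - γ.get ⟨i, Nat.lt_of_succ_lt h⟩ = e1 ∨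
      γ.get ⟨i + 1, h⟩ - γ.get ⟨i, Nat.lt_of_succ_lt h⟩ = e2

/-- The (bulk) weight collected by a path. -/
def pathWeight (w : Vertex → ℝ) (γ : List Vertex) : ℝ := (γ.map w).sum

/-- The bulk last-passage time `T(u,v)`. -/
noncomputable def lastPassageTime (w : Vertex → ℝ) (u v : Vertex) : ℝ :=
  sSup {r : ℝ | ∃ γ : List Vertex, IsDirPath u v γ ∧ pathWeight w γ = r}

/-- `γ` is a bulk geodesic from `u` to `v`. -/
def IsGeodesic (w : Vertex → ℝ) (u v : Vertex) (γ : List Vertex) : Prop :=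
  IsDirPath u v γ ∧ pathWeight w γ = lastPassageTime w u v

/-- The effective vertex weight for the travel times with boundary weights on the
bottom-left boundary of `R_{u,v}`: points `≠ u` on the horizontal line through `u`
carry `ω^H`, points `≠ u` on the vertical line through `u` carry `ω^V`, points of
`R_{u+e₊, v}` carry the bulk weight, and `u` carries no weight. -/
def bWeight (wH wV w : Vertex → ℝ) (u v : Vertex) (z : Vertex) : ℝ :=
  if z = u then 0
  else if z.2 = u.2 then wH z
  else if z.1 = u.1 then wV z
  else if u.1 + 1 ≤ z.1 ∧ z.1 ≤ v.1 ∧ u.2 + 1 ≤ z.2 ∧ z.2 ≤ v.2 then w z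
  else 0

/-- The boundary weight `T_b(γ)` of a path. -/
def bPathWeight (wH wV w : Vertex → ℝ) (u v : Vertex) (γ : List Vertex) : ℝ :=
  (γ.map (bWeight wH wV w u v)).sum

/-- The boundary travel time `T_b(u,v)`. -/
noncomputable def bLastPassageTime (wH wV w : Vertex → ℝ) (u v : Vertex) : ℝ :=
  sSup {r : ℝ | ∃ γ : List Vertex, IsDirPath u v γ ∧ bPathWeight wH wV w u v γ = r}

/-- `γ` is a boundary geodesic from `u` to `v`. -/
def IsBGeodesic (wH wV w : Vertex → ℝ) (u v : Vertex) (γ : List Vertex) : Prop :=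
  IsDirPath u v γ ∧ bPathWeight wH wV w u v γ = bLastPassageTime wH wV w u v

/-- A directed path `γ` is above a directed path `γ'` if for every vertical line meeting
both, the lowest point of `γ` on that line is weakly higher than the lowest point of
`γ'` on it. -/
def PathAbove (γ γ' : List Vertex) : Prop :=
  ∀ c : ℤ, (∃ y : ℤ, ((c, y) : Vertex) ∈ γ) → (∃ y' : ℤ, ((c, y') : Vertex) ∈ γ') →
    ∃ y' : ℤ, ((c, y') : Vertex) ∈ γ' ∧ ∀ y : ℤ, ((c, y) : Vertex) ∈ γ → y' ≤ y

def P (γ : List Vertex) (i : ℕ) : Vertex := γ.getD i (0,0)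

lemma P_eq_get (γ : List Vertex) (i : ℕ) (h : i < γ.length) : P γ i = γ.get ⟨i, h⟩ := by
  simp [P, List.getD_eq_getElem?_getD, List.getElem?_eq_getElem h]

lemma P_eq_getElem (γ : List Vertex) (i : ℕ) (h : i < γ.length) : P γ i = γ[i] :=
  P_eq_get γ i h

lemma dir_len {u v : Vertex} {γ : List Vertex} (h : IsDirPath u v γ) : 0 < γ.length :=
  List.length_pos_iff.mpr h.1

lemma dir_P0 {u v : Vertex} {γ : List Vertex} (h : IsDirPath u v γ) : P γ 0 = u := by
  have h0 := h.2.1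
  rw [List.head?_eq_head h.1, List.head_eq_getElem_zero h.1] at h0
  rw [P_eq_getElem γ 0 (dir_len h)]
  exact Option.some.inj h0

lemma dir_Plast {u v : Vertex} {γ : List Vertex} (h : IsDirPath u v γ) :
    P γ (γ.length - 1) = v := by
  have h0 := h.2.2.1
  rw [List.getLast?_eq_getLast h.1, List.getLast_eq_getElem] at h0
  rw [P_eq_getElem γ _ (Nat.sub_lt (dir_len h) one_pos)]
  exact Option.some.inj h0

lemma dir_step {u v : Vertex} {γ : List Vertex} (h : IsDirPath u v γ) (i : ℕ)
    (hi : i + 1 < γ.length) :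
    P γ (i+1) = P γ i + e1 ∨ P γ (i+1) = P γ i + e2 := by
  rw [P_eq_get γ _ hi, P_eq_get γ i (Nat.lt_of_succ_lt hi)]
  rcases h.2.2.2 i hi with h' | h'
  · left; rw [← sub_eq_iff_eq_add', h']
  · right; rw [← sub_eq_iff_eq_add', h']

lemma dir_mem {γ : List Vertex} {z : Vertex} :
    z ∈ γ ↔ ∃ i, i < γ.length ∧ P γ i = z := by
  rw [List.mem_iff_getElem]
  constructor
  · rintro ⟨i, hi, rfl⟩; exact ⟨i, hi, P_eq_getElem γ i hi⟩
  · rintro ⟨i, hi, rfl⟩; exact ⟨i, hi, (P_eq_getElem γ i hi).symm⟩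

lemma e1_def : e1 = ((1 : ℤ), (0 : ℤ)) := rfl
lemma e2_def : e2 = ((0 : ℤ), (1 : ℤ)) := rfl

lemma dir_step' {u v : Vertex} {γ : List Vertex} (h : IsDirPath u v γ) (i : ℕ)
    (hi : i + 1 < γ.length) :
    ((P γ (i+1)).1 = (P γ i).1 + 1 ∧ (P γ (i+1)).2 = (P γ i).2) ∨
    ((P γ (i+1)).1 = (P γ i).1 ∧ (P γ (i+1)).2 = (P γ i).2 + 1) := by
  rcases dir_step h i hi with h' | h' <;> rw [h'] <;> simp [e1_def, e2_def]

lemma dir_col_mono {u v : Vertex} {γ : List Vertex} (h : IsDirPath u v γ) :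
    ∀ i j, i ≤ j → j < γ.length → (P γ i).1 ≤ (P γ j).1 ∧ (P γ i).2 ≤ (P γ j).2 := by
  intro i j hij hj
  induction j with
  | zero => simp_all
  | succ n ih =>
    rcases Nat.eq_or_lt_of_le hij with rfl | hlt
    · exact ⟨le_refl _, le_refl _⟩
    · have hn : i ≤ n := Nat.lt_succ_iff.mp hlt
      have h1 := ih hn (Nat.lt_of_succ_lt hj)
      have h2 := dir_step' h n hj
      constructor <;> omega

lemma dir_csum {u v : Vertex} {γ : List Vertex} (h : IsDirPath u v γ) :
    ∀ i, i < γ.length → (P γ i).1 + (P γ i).2 = u.1 + u.2 + i := by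
  intro i hi
  induction i with
  | zero => rw [dir_P0 h]; simp
  | succ n ih =>
    have hn := ih (Nat.lt_of_succ_lt hi)
    have h2 := dir_step' h n hi
    push_cast
    push_cast at hn
    omega

lemma dir_rect {u v : Vertex} {γ : List Vertex} (h : IsDirPath u v γ) :
    ∀ i, i < γ.length → u.1 ≤ (P γ i).1 ∧ (P γ i).1 ≤ v.1 ∧ u.2 ≤ (P γ i).2 ∧ (P γ i).2 ≤ v.2 := by
  intro i hi
  have h1 := dir_col_mono h 0 i (Nat.zero_le i) hi
  have h2 := dir_col_mono h i (γ.length - 1) (by omega) (by omega)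
  rw [dir_P0 h] at h1
  rw [dir_Plast h] at h2
  exact ⟨h1.1, h2.1, h1.2, h2.2⟩

lemma dir_nodup {u v : Vertex} {γ : List Vertex} (h : IsDirPath u v γ) : γ.Nodup := by
  rw [List.nodup_iff_injective_get]
  rintro ⟨i, hi⟩ ⟨j, hj⟩ hij
  have hi' := dir_csum h i hi
  have hj' := dir_csum h j hj
  rw [P_eq_get γ i hi] at hi'
  rw [P_eq_get γ j hj, ← hij] at hj'
  simp only [Fin.mk.injEq]
  omega

lemma dir_col_surj {u v : Vertex} {γ : List Vertex} (h : IsDirPath u v γ) (c : ℤ)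
    (hc1 : u.1 ≤ c) (hc2 : c ≤ v.1) : ∃ i, i < γ.length ∧ (P γ i).1 = c := by
  by_contra hcon
  push_neg at hcon
  have key : ∀ i, i < γ.length → (P γ i).1 ≤ c := by
    intro i hi
    induction i with
    | zero => rw [dir_P0 h]; exact hc1
    | succ n ih =>
      have hn := ih (Nat.lt_of_succ_lt hi)
      have hne := hcon n (Nat.lt_of_succ_lt hi)
      have h2 := dir_step' h n hi
      omega
  have h1 := key (γ.length - 1) (by have := dir_len h; omega)
  have hne := hcon (γ.length - 1) (by have := dir_len h; omega)
  rw [dir_Plast h] at h1 hne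
  omega

/-- The minimal row of a path on the vertical line with abscissa `c`. -/
noncomputable def mrow (γ : List Vertex) (c : ℤ) : ℤ := sInf {y : ℤ | (c, y) ∈ γ}

lemma mrow_mem {u v : Vertex} {γ : List Vertex} (h : IsDirPath u v γ) {c : ℤ}
    (hc1 : u.1 ≤ c) (hc2 : c ≤ v.1) : (c, mrow γ c) ∈ γ := by
  have hne : {y : ℤ | (c, y) ∈ γ}.Nonempty := by
    obtain ⟨i, hi, hci⟩ := dir_col_surj h c hc1 hc2
    exact ⟨(P γ i).2, by rw [Set.mem_setOf_eq, ← hci]; exact dir_mem.mpr ⟨i, hi, rfl⟩⟩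
  have hbd : BddBelow {y : ℤ | (c, y) ∈ γ} := by
    refine ⟨u.2, fun y hy => ?_⟩
    obtain ⟨i, hi, hPi⟩ := dir_mem.mp hy
    have := (dir_rect h i hi).2.2.1
    rw [hPi] at this
    exact this
  exact Int.csInf_mem hne hbd

lemma mrow_le {γ : List Vertex} {c y : ℤ} (hy : (c, y) ∈ γ) (hbd : BddBelow {y : ℤ | (c, y) ∈ γ}) :
    mrow γ c ≤ y := csInf_le hbd hy

lemma dir_bddBelow {u v : Vertex} {γ : List Vertex} (h : IsDirPath u v γ) (c : ℤ) :
    BddBelow {y : ℤ | (c, y) ∈ γ} := by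
  refine ⟨u.2, fun y hy => ?_⟩
  obtain ⟨i, hi, hPi⟩ := dir_mem.mp hy
  have := (dir_rect h i hi).2.2.1
  rw [hPi] at this
  exact this

lemma dir_mrow_le {u v : Vertex} {γ : List Vertex} (h : IsDirPath u v γ) {c y : ℤ}
    (hy : (c, y) ∈ γ) : mrow γ c ≤ y := mrow_le hy (dir_bddBelow h c)

lemma mrow_base {u v : Vertex} {γ : List Vertex} (h : IsDirPath u v γ) : mrow γ u.1 = u.2 := by
  have hu : ((u.1, u.2) : Vertex) ∈ γ := by
    have := dir_P0 h
    exact dir_mem.mpr ⟨0, dir_len h, by rw [this]⟩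
  refine le_antisymm (dir_mrow_le h hu) ?_
  have := mrow_mem h (le_refl u.1) (by
    have := dir_rect h (γ.length - 1) (by have := dir_len h; omega)
    rw [dir_Plast h] at this
    exact this.1)
  obtain ⟨i, hi, hPi⟩ := dir_mem.mp this
  have h2 := (dir_rect h i hi).2.2.1
  rw [hPi] at h2
  exact h2

lemma mrow_ge_u2 {u v : Vertex} {γ : List Vertex} (h : IsDirPath u v γ) {c : ℤ}
    (hc1 : u.1 ≤ c) (hc2 : c ≤ v.1) : u.2 ≤ mrow γ c := by
  obtain ⟨i, hi, hPi⟩ := dir_mem.mp (mrow_mem h hc1 hc2)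
  have h2 := (dir_rect h i hi).2.2.1
  rw [hPi] at h2
  exact h2

/-- The first point of a path in column `c > u.1` is `(c, mrow γ c)`, it is entered by an
`e1`-step from `(c-1, mrow γ c)`. -/
lemma entry_step {u v : Vertex} {γ : List Vertex} (h : IsDirPath u v γ) {c : ℤ}
    (hc1 : u.1 < c) (hc2 : c ≤ v.1) :
    ∃ k, k + 1 < γ.length ∧ P γ k = (c - 1, mrow γ c) ∧ P γ (k+1) = (c, mrow γ c) := by
  classical
  have hex : ∃ i, i < γ.length ∧ (P γ i).1 = c := dir_col_surj h c (le_of_lt hc1) hc2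
  set j := Nat.find hex with hjdef
  obtain ⟨hjlen, hjc⟩ : j < γ.length ∧ (P γ j).1 = c := Nat.find_spec hex
  have hj0 : 0 < j := by
    by_contra h0
    have : j = 0 := by omega
    rw [this, dir_P0 h] at hjc
    omega
  -- j-1 step
  have hk : j - 1 + 1 = j := by omega
  have hklt : j - 1 + 1 < γ.length := by omega
  have hstep := dir_step' h (j-1) hklt
  have hprev : (P γ (j-1)).1 ≠ c := by
    intro hcc
    exact Nat.find_min hex (m := j - 1) (by omega) ⟨by omega, hcc⟩
  -- show the row of P γ j equals mrow γ c
  have hmin : (P γ j).2 = mrow γ c := by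
    refine le_antisymm ?_ ?_
    · obtain ⟨i, hi, hPi⟩ := dir_mem.mp (mrow_mem h (le_of_lt hc1) hc2)
      have hji : j ≤ i := by
        by_contra hji
        have := Nat.find_min hex (m := i) (by omega)
        push_neg at this
        have hbad := this hi
        rw [hPi] at hbad
        exact hbad rfl
      have := (dir_col_mono h j i hji hi).2
      rw [hPi] at this
      exact this
    · exact dir_mrow_le h (dir_mem.mpr ⟨j, hjlen, by
        rw [← hjc]⟩)
  refine ⟨j - 1, hklt, ?_, ?_⟩
  · rw [hk] at hstep
    rcases hstep with ⟨ha, hb⟩ | ⟨ha, hb⟩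
    · exact Prod.ext_iff.mpr ⟨by omega, by omega⟩
    · exact absurd (by omega : (P γ (j-1)).1 = c) hprev
  · rw [hk]
    exact Prod.ext_iff.mpr ⟨hjc, hmin⟩

/-- If a path is at `(c, t)` with `c < v.1` and `t` strictly below the entry row of
column `c+1`, then its next step is vertical. -/
lemma up_step_aux {u v : Vertex} {γ : List Vertex} (h : IsDirPath u v γ) {c t : ℤ}
    (hc2 : c + 1 ≤ v.1) {k : ℕ} (hk : k < γ.length) (hPk : P γ k = (c, t))
    (ht : t < mrow γ (c+1)) :
    k + 1 < γ.length ∧ P γ (k+1) = (c, t+1) := by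
  have hkne : k ≠ γ.length - 1 := by
    intro he
    have := dir_Plast h
    rw [← he, hPk] at this
    have : c = v.1 := congrArg Prod.fst this
    omega
  have hk1 : k + 1 < γ.length := by omega
  refine ⟨hk1, ?_⟩
  rcases dir_step' h k hk1 with ⟨ha, hb⟩ | ⟨ha, hb⟩
  · exfalso
    have hmem : ((c+1, t) : Vertex) ∈ γ := by
      refine dir_mem.mpr ⟨k+1, hk1, ?_⟩
      rw [hPk] at ha hb
      exact Prod.ext_iff.mpr ⟨by simpa using ha, by simpa using hb⟩
    have := dir_mrow_le h hmem
    omega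
  · rw [hPk] at ha hb
    exact Prod.ext_iff.mpr ⟨by simpa using ha, by simpa using hb⟩

/-- Column fill: every row between the minimum rows of consecutive columns is attained,
with a vertical step. -/
lemma fill {u v : Vertex} {γ : List Vertex} (h : IsDirPath u v γ) {c : ℤ}
    (hc1 : u.1 ≤ c) (hc2 : c + 1 ≤ v.1) :
    ∀ t : ℤ, mrow γ c ≤ t → t < mrow γ (c+1) →
      ∃ k, k + 1 < γ.length ∧ P γ k = (c, t) ∧ P γ (k+1) = (c, t+1) := by
  intro t ht
  refine Int.le_induction (m := mrow γ c)
    (motive := fun t _ => t < mrow γ (c+1) →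
      ∃ k, k + 1 < γ.length ∧ P γ k = (c, t) ∧ P γ (k+1) = (c, t+1)) ?_ ?_ t ht
  · intro ht
    obtain ⟨k, hk, hPk⟩ := dir_mem.mp (mrow_mem h hc1 (by omega))
    obtain ⟨h1, h2⟩ := up_step_aux h hc2 hk hPk ht
    exact ⟨k, h1, hPk, h2⟩
  · intro t ht ih ht2
    obtain ⟨k, hk1, hPk, hPk1⟩ := ih (by omega)
    obtain ⟨h1, h2⟩ := up_step_aux h hc2 hk1 hPk1 ht2
    exact ⟨k+1, h1, hPk1, h2⟩

/-- If a path starts with a vertical step, all its points in columns `> u.1` have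
row `≥ u.2 + 1`. -/
lemma row_ge_of_e2_mem {u v : Vertex} {γ : List Vertex} (h : IsDirPath u v γ)
    (he2 : u + e2 ∈ γ) :
    ∀ i, i < γ.length → u.1 < (P γ i).1 → u.2 + 1 ≤ (P γ i).2 := by
  intro i hi hcol
  obtain ⟨iV, hiV, hPiV⟩ := dir_mem.mp he2
  have hPiV1 : (P γ iV).1 = u.1 := by rw [hPiV]; simp [e2_def]
  have hPiV2 : (P γ iV).2 = u.2 + 1 := by rw [hPiV]; simp [e2_def]
  have hle : iV ≤ i := by
    by_contra hgt
    have := (dir_col_mono h i iV (by omega) hiV).1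
    omega
  have := (dir_col_mono h iV i hle hi).2
  omega

section weights
variable {u v : Vertex} {w wH wV : Vertex → ℝ}

lemma w_le_bWeight (hw : ∀ x, 0 ≤ w x)
    (hH : ∀ i : ℤ, 1 ≤ i → i ≤ v.1 - u.1 → w (u + i • e1) ≤ wH (u + i • e1))
    (hV : ∀ j : ℤ, 1 ≤ j → j ≤ v.2 - u.2 → w (u + j • e2) ≤ wV (u + j • e2))
    (x : Vertex) (hx1 : u.1 ≤ x.1) (hx2 : x.1 ≤ v.1) (hx3 : u.2 ≤ x.2) (hx4 : x.2 ≤ v.2)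
    (hxu : x ≠ u) : w x ≤ bWeight wH wV w u v x := by
  rw [bWeight, if_neg hxu]
  by_cases h2 : x.2 = u.2
  · rw [if_pos h2]
    have hx1' : u.1 + 1 ≤ x.1 := by
      rcases lt_or_eq_of_le hx1 with h' | h'
      · omega
      · exfalso; exact hxu (Prod.ext_iff.mpr ⟨h'.symm, h2⟩)
    have := hH (x.1 - u.1) (by omega) (by omega)
    have hxe : u + (x.1 - u.1) • e1 = x := by
      simp [e1_def, Prod.ext_iff]
      omega
    rwa [hxe] at this
  · rw [if_neg h2]
    by_cases h1 : x.1 = u.1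
    · rw [if_pos h1]
      have := hV (x.2 - u.2) (by omega) (by omega)
      have hxe : u + (x.2 - u.2) • e2 = x := by
        simp [e2_def, Prod.ext_iff]
        omega
      rwa [hxe] at this
    · rw [if_neg h1, if_pos ⟨by omega, hx2, by omega, hx4⟩]

lemma bWeight_eq_w (x : Vertex) (hx1 : u.1 + 1 ≤ x.1) (hx2 : x.1 ≤ v.1)
    (hx3 : u.2 + 1 ≤ x.2) (hx4 : x.2 ≤ v.2) : bWeight wH wV w u v x = w x := by
  rw [bWeight, if_neg (by intro h; rw [h] at hx1; omega),
    if_neg (by omega), if_neg (by omega), if_pos ⟨hx1, hx2, hx3, hx4⟩]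

lemma bWeight_nonneg (hw : ∀ x, 0 ≤ w x)
    (hH : ∀ i : ℤ, 1 ≤ i → i ≤ v.1 - u.1 → w (u + i • e1) ≤ wH (u + i • e1))
    (hV : ∀ j : ℤ, 1 ≤ j → j ≤ v.2 - u.2 → w (u + j • e2) ≤ wV (u + j • e2))
    (x : Vertex) (hx1 : u.1 ≤ x.1) (hx2 : x.1 ≤ v.1) (hx3 : u.2 ≤ x.2) (hx4 : x.2 ≤ v.2) :
    0 ≤ bWeight wH wV w u v x := by
  by_cases hxu : x = u
  · rw [bWeight, if_pos hxu]
  · exact le_trans (hw x) (w_le_bWeight hw hH hV x hx1 hx2 hx3 hx4 hxu)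

end weights

section sup
variable {u v : Vertex}

lemma path_sum_le {f : Vertex → ℝ}
    (hf : ∀ x ∈ Finset.Icc u v, 0 ≤ f x) {γ : List Vertex} (h : IsDirPath u v γ) :
    (γ.map f).sum ≤ ∑ x ∈ Finset.Icc u v, f x := by
  have hnd := dir_nodup h
  rw [← List.sum_toFinset f hnd]
  refine Finset.sum_le_sum_of_subset_of_nonneg ?_ (fun x hx _ => hf x hx)
  intro x hx
  rw [List.mem_toFinset] at hx
  obtain ⟨i, hi, hPi⟩ := dir_mem.mp hx
  obtain ⟨h1, h2, h3, h4⟩ := dir_rect h i hi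
  rw [hPi] at h1 h2 h3 h4
  rw [Finset.mem_Icc]
  exact ⟨⟨h1, h3⟩, ⟨h2, h4⟩⟩

lemma lpt_bddAbove {f : Vertex → ℝ} (hf : ∀ x ∈ Finset.Icc u v, 0 ≤ f x) :
    BddAbove {r : ℝ | ∃ γ : List Vertex, IsDirPath u v γ ∧ (γ.map f).sum = r} := by
  refine ⟨∑ x ∈ Finset.Icc u v, f x, fun r hr => ?_⟩
  obtain ⟨γ, hγ, rfl⟩ := hr
  exact path_sum_le hf hγ

variable {w wH wV : Vertex → ℝ}

lemma geodesic_dominates (hw : ∀ x, 0 ≤ w x) {γ γ₂ : List Vertex}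
    (hγ : IsGeodesic w u v γ) (h₂ : IsDirPath u v γ₂) :
    pathWeight w γ₂ ≤ pathWeight w γ := by
  rw [hγ.2]
  exact le_csSup (lpt_bddAbove (fun x _ => hw x)) ⟨γ₂, h₂, rfl⟩

lemma bgeodesic_dominates (hw : ∀ x, 0 ≤ w x)
    (hH : ∀ i : ℤ, 1 ≤ i → i ≤ v.1 - u.1 → w (u + i • e1) ≤ wH (u + i • e1))
    (hV : ∀ j : ℤ, 1 ≤ j → j ≤ v.2 - u.2 → w (u + j • e2) ≤ wV (u + j • e2))
    {γ γ₂ : List Vertex}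
    (hγ : IsBGeodesic wH wV w u v γ) (h₂ : IsDirPath u v γ₂) :
    bPathWeight wH wV w u v γ₂ ≤ bPathWeight wH wV w u v γ := by
  rw [hγ.2]
  refine le_csSup (lpt_bddAbove (fun x hx => ?_)) ⟨γ₂, h₂, rfl⟩
  rw [Finset.mem_Icc] at hx
  exact bWeight_nonneg hw hH hV x hx.1.1 hx.2.1 hx.1.2 hx.2.2

lemma bgeodesic_of_ge (hw : ∀ x, 0 ≤ w x)
    (hH : ∀ i : ℤ, 1 ≤ i → i ≤ v.1 - u.1 → w (u + i • e1) ≤ wH (u + i • e1))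
    (hV : ∀ j : ℤ, 1 ≤ j → j ≤ v.2 - u.2 → w (u + j • e2) ≤ wV (u + j • e2))
    {γ γ' : List Vertex}
    (hγ : IsBGeodesic wH wV w u v γ) (h' : IsDirPath u v γ')
    (hge : bPathWeight wH wV w u v γ ≤ bPathWeight wH wV w u v γ') :
    IsBGeodesic wH wV w u v γ' := by
  refine ⟨h', le_antisymm ?_ ?_⟩
  · refine le_csSup (lpt_bddAbove (fun x hx => ?_)) ⟨γ', h', rfl⟩
    rw [Finset.mem_Icc] at hx
    exact bWeight_nonneg hw hH hV x hx.1.1 hx.2.1 hx.1.2 hx.2.2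
  · rw [← hγ.2]
    exact hge

end sup

lemma P_def' (γ : List Vertex) (i : ℕ) : P γ i = (γ[i]?).getD (0,0) := by
  simp [P, List.getD_eq_getElem?_getD]

lemma P_append_left {A B : List Vertex} {i : ℕ} (h : i < A.length) :
    P (A ++ B) i = P A i := by
  rw [P_def', P_def', List.getElem?_append_left h]

lemma P_append_right {A B : List Vertex} {i : ℕ} (h : A.length ≤ i) :
    P (A ++ B) i = P B (i - A.length) := by
  rw [P_def', P_def', List.getElem?_append_right h]

lemma P_take {γ : List Vertex} {n i : ℕ} (h : i < n) : P (γ.take n) i = P γ i := by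
  rw [P_def', P_def', List.getElem?_take]
  simp [h]

lemma P_drop (γ : List Vertex) (n i : ℕ) : P (γ.drop n) i = P γ (n + i) := by
  rw [P_def', P_def', List.getElem?_drop]

lemma isDirPath_of_P {u v : Vertex} {γ : List Vertex} (hlen : 0 < γ.length)
    (h0 : P γ 0 = u) (hl : P γ (γ.length - 1) = v)
    (hs : ∀ i, i + 1 < γ.length → P γ (i+1) = P γ i + e1 ∨ P γ (i+1) = P γ i + e2) :
    IsDirPath u v γ := by
  have hne : γ ≠ [] := List.length_pos_iff.mp hlen
  refine ⟨hne, ?_, ?_, ?_⟩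
  · rw [List.head?_eq_head hne, List.head_eq_getElem_zero hne, ← P_eq_getElem γ 0 hlen, h0]
  · rw [List.getLast?_eq_getLast hne, List.getLast_eq_getElem,
      ← P_eq_getElem γ _ (Nat.sub_lt hlen one_pos), hl]
  · intro i hi
    rcases hs i hi with h' | h'
    · left
      rw [← P_eq_get γ _ hi, ← P_eq_get γ i (Nat.lt_of_succ_lt hi), h', add_sub_cancel_left]
    · right
      rw [← P_eq_get γ _ hi, ← P_eq_get γ i (Nat.lt_of_succ_lt hi), h', add_sub_cancel_left]

/-- Concatenating the prefix of one directed path with the suffix of another at a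
junction whose step is admissible yields a directed path. -/
lemma concat_dir {u v : Vertex} {γ1 γ2 : List Vertex}
    (h1 : IsDirPath u v γ1) (h2 : IsDirPath u v γ2) {k m : ℕ}
    (hk : k < γ1.length) (hm : m + 1 < γ2.length)
    (hstep : P γ2 (m+1) = P γ1 k + e1 ∨ P γ2 (m+1) = P γ1 k + e2) :
    IsDirPath u v (γ1.take (k+1) ++ γ2.drop (m+1)) := by
  set A := γ1.take (k+1) with hA
  set B := γ2.drop (m+1) with hB
  have hAlen : A.length = k + 1 := by rw [hA, List.length_take]; omega
  have hBlen : B.length = γ2.length - (m+1) := by rw [hB, List.length_drop]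
  have hBpos : 0 < B.length := by omega
  have hlen : (A ++ B).length = k + 1 + (γ2.length - (m+1)) := by
    rw [List.length_append, hAlen, hBlen]
  refine isDirPath_of_P (by rw [hlen]; omega) ?_ ?_ ?_
  · rw [P_append_left (by omega), hA, P_take (by omega), dir_P0 h1]
  · rw [hlen]
    have : k + 1 + (γ2.length - (m+1)) - 1 = k + 1 + (γ2.length - (m+1) - 1) := by omega
    rw [this, P_append_right (by omega), hAlen]
    have : k + 1 + (γ2.length - (m + 1) - 1) - (k+1) = γ2.length - (m+1) - 1 := by omega
    rw [this, hB, P_drop]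
    have : m + 1 + (γ2.length - (m + 1) - 1) = γ2.length - 1 := by omega
    rw [this, dir_Plast h2]
  · intro i hi
    rw [hlen] at hi
    rcases lt_trichotomy i k with hik | hik | hik
    · -- both in A
      have q1 : i + 1 < A.length := by omega
      have q2 : i < A.length := by omega
      rw [P_append_left q1, P_append_left q2, hA,
        P_take (show i + 1 < k + 1 by omega), P_take (show i < k + 1 by omega)]
      exact dir_step h1 i (by omega)
    · -- junction
      subst hik
      have q1 : A.length ≤ i + 1 := by omega
      have q2 : i < A.length := by omega
      rw [P_append_left q2, P_append_right q1, hA, hAlen,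
        P_take (Nat.lt_succ_self i)]
      have : i + 1 - (i + 1) = 0 := by omega
      rw [this, hB, P_drop]
      simpa using hstep
    · -- both in B
      have hik' : k + 1 ≤ i := hik
      have q1 : A.length ≤ i + 1 := by omega
      have q2 : A.length ≤ i := by omega
      rw [P_append_right q1, P_append_right q2, hAlen, hB, P_drop, P_drop]
      have e1 : m + 1 + (i + 1 - (k+1)) = (m + 1 + (i - (k+1))) + 1 := by omega
      rw [e1]
      exact dir_step h2 _ (by omega)

lemma mem_drop_ex {γ : List Vertex} {n : ℕ} {x : Vertex} (hx : x ∈ γ.drop n) :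
    ∃ i, n ≤ i ∧ i < γ.length ∧ P γ i = x := by
  obtain ⟨j, hj, hxj⟩ := List.mem_iff_getElem.mp hx
  rw [List.getElem_drop] at hxj
  have hj' : n + j < γ.length := by
    rw [List.length_drop] at hj
    omega
  exact ⟨n + j, by omega, hj', by rw [P_eq_getElem _ _ hj']; exact hxj⟩

lemma index_mem_drop {γ : List Vertex} {n i : ℕ} (h1 : n ≤ i) (h2 : i < γ.length) :
    P γ i ∈ γ.drop n := by
  have hlt : i - n < (γ.drop n).length := by rw [List.length_drop]; omega
  have : (γ.drop n)[i - n] ∈ γ.drop n := List.getElem_mem hlt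
  rwa [List.getElem_drop, ← P_eq_getElem _ _ (show n + (i - n) < γ.length by omega),
    show n + (i - n) = i by omega] at this

lemma sum_split (f : Vertex → ℝ) (γ : List Vertex) (n : ℕ) :
    (γ.map f).sum = ((γ.take n).map f).sum + ((γ.drop n).map f).sum := by
  conv_lhs => rw [← List.take_append_drop n γ]
  rw [List.map_append, List.sum_append]

lemma sum_append' (f : Vertex → ℝ) (A B : List Vertex) :
    ((A ++ B).map f).sum = (A.map f).sum + (B.map f).sum := by
  rw [List.map_append, List.sum_append]

section main
variable {u v : Vertex} {w wH wV : Vertex → ℝ}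

lemma part1_core
    (hw : ∀ x, 0 ≤ w x)
    (hH : ∀ i : ℤ, 1 ≤ i → i ≤ v.1 - u.1 → w (u + i • e1) ≤ wH (u + i • e1))
    (hV : ∀ j : ℤ, 1 ≤ j → j ≤ v.2 - u.2 → w (u + j • e2) ≤ wV (u + j • e2))
    {γb γ : List Vertex}
    (hb : IsBGeodesic wH wV w u v γb)
    (hdown : ∀ γb' : List Vertex, IsBGeodesic wH wV w u v γb' → PathAbove γb' γb)
    (he1 : (u + e1) ∈ γb)
    (hg : IsGeodesic w u v γ) :
    ∀ c : ℤ, u.1 ≤ c → c ≤ v.1 → mrow γb c ≤ mrow γ c := by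
  have hbdir := hb.1
  have hgdir := hg.1
  intro c hc
  refine Int.le_induction (m := u.1)
    (motive := fun c _ => c ≤ v.1 → mrow γb c ≤ mrow γ c) ?_ ?_ c hc
  · intro _
    rw [mrow_base hbdir, mrow_base hgdir]
  · intro c hc IH hc2
    by_contra hcon
    push_neg at hcon
    -- c0 = c + 1
    rcases eq_or_lt_of_le hc with rfl | hcgt
    · -- c + 1 = u.1 + 1 : use u + e1 ∈ γb
      have h1 : mrow γb (u.1 + 1) ≤ u.2 := by
        have hmem : ((u.1 + 1, u.2) : Vertex) ∈ γb := by
          have he : u + e1 = ((u.1 + 1, u.2) : Vertex) := by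
            rw [e1_def]; exact Prod.ext_iff.mpr ⟨rfl, by norm_num⟩
          rwa [he] at he1
        exact dir_mrow_le hbdir hmem
      have h2 : u.2 ≤ mrow γ (u.1 + 1) := mrow_ge_u2 hgdir (by omega) hc2
      omega
    · have hIH : mrow γb c ≤ mrow γ c := IH (by omega)
      set t := mrow γ (c+1) with htdef
      obtain ⟨k0, hk0len, hP0, hP1⟩ := entry_step hgdir (by omega) hc2
      rw [← htdef] at hP0 hP1
      have htc : mrow γ c ≤ t := by
        refine dir_mrow_le hgdir (dir_mem.mpr ⟨k0, by omega, ?_⟩)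
        rw [hP0]; norm_num
      obtain ⟨k, hklen, hQ0, hQ1⟩ := fill hbdir (by omega) hc2 t (by omega) hcon
      have htu2 : u.2 ≤ t := mrow_ge_u2 hgdir (by omega) (by omega)
      -- the two new paths
      have hstep1 : P γ (k0+1) = P γb k + e1 ∨ P γ (k0+1) = P γb k + e2 := by
        left; rw [hP1, hQ0, e1_def]
        exact Prod.ext_iff.mpr ⟨by norm_num, by norm_num⟩
      have hstep2 : P γb (k+1) = P γ k0 + e1 ∨ P γb (k+1) = P γ k0 + e2 := by
        right; rw [hQ1, hP0, e2_def]
        exact Prod.ext_iff.mpr ⟨by norm_num, by norm_num⟩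
      have hdir1 : IsDirPath u v (γb.take (k+1) ++ γ.drop (k0+1)) :=
        concat_dir hbdir hgdir (by omega) hk0len hstep1
      have hdir2 : IsDirPath u v (γ.take (k0+1) ++ γb.drop (k+1)) :=
        concat_dir hgdir hbdir (by omega) hklen hstep2
      -- bulk weight comparison
      have hW : pathWeight w (γ.take (k0+1) ++ γb.drop (k+1)) ≤ pathWeight w γ :=
        geodesic_dominates hw hg hdir2
      rw [pathWeight, pathWeight, sum_append' w, sum_split w γ (k0+1)] at hW
      have hWtails : ((γb.drop (k+1)).map w).sum ≤ ((γ.drop (k0+1)).map w).sum := by linarith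
      -- boundary weights of the tails
      have hbW1 : ((γ.drop (k0+1)).map w).sum ≤
          ((γ.drop (k0+1)).map (bWeight wH wV w u v)).sum := by
        refine List.sum_le_sum ?_
        intro x hx
        obtain ⟨i, hni, hilen, hPi⟩ := mem_drop_ex hx
        obtain ⟨r1, r2, r3, r4⟩ := dir_rect hgdir i hilen
        have hcol : (P γ (k0+1)).1 ≤ (P γ i).1 := (dir_col_mono hgdir (k0+1) i hni hilen).1
        rw [hP1] at hcol
        rw [hPi] at r1 r2 r3 r4 hcol
        refine w_le_bWeight hw hH hV x r1 r2 r3 r4 ?_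
        intro hxu
        rw [hxu] at hcol
        simp at hcol
        omega
      have hbW2 : ((γb.drop (k+1)).map (bWeight wH wV w u v)).sum =
          ((γb.drop (k+1)).map w).sum := by
        refine congrArg List.sum (List.map_congr_left ?_)
        intro x hx
        obtain ⟨i, hni, hilen, hPi⟩ := mem_drop_ex hx
        obtain ⟨r1, r2, r3, r4⟩ := dir_rect hbdir i hilen
        have hcol := (dir_col_mono hbdir (k+1) i hni hilen).1
        have hrow := (dir_col_mono hbdir (k+1) i hni hilen).2
        rw [hQ1] at hcol hrow
        rw [hPi] at r2 r4 hcol hrow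
        simp only at hcol hrow
        exact bWeight_eq_w x (by omega) r2 (by omega) r4
      -- γb' is a boundary geodesic
      have hge : bPathWeight wH wV w u v γb ≤
          bPathWeight wH wV w u v (γb.take (k+1) ++ γ.drop (k0+1)) := by
        rw [bPathWeight, bPathWeight, sum_append' _, sum_split (bWeight wH wV w u v) γb (k+1)]
        linarith [hbW1, hWtails, hbW2]
      have hbgeo : IsBGeodesic wH wV w u v (γb.take (k+1) ++ γ.drop (k0+1)) :=
        bgeodesic_of_ge hw hH hV hb hdir1 hge
      -- contradiction with downmostness at column c+1
      have habove := hdown _ hbgeo (c+1) ?_ ?_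
      · obtain ⟨y', hy'mem, hall⟩ := habove
        have h1 : mrow γb (c+1) ≤ y' := dir_mrow_le hbdir hy'mem
        have h2 : y' ≤ t := by
          refine hall t ?_
          refine List.mem_append_right _ ?_
          have := index_mem_drop (le_refl (k0+1)) hk0len
          rwa [hP1] at this
        omega
      · -- γb' meets column c+1
        refine ⟨t, List.mem_append_right _ ?_⟩
        have := index_mem_drop (le_refl (k0+1)) hk0len
        rwa [hP1] at this
      · exact ⟨mrow γb (c+1), mrow_mem hbdir (by omega) hc2⟩

end main

lemma mem_take_ex {γ : List Vertex} {n : ℕ} {x : Vertex} (hx : x ∈ γ.take n) :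
    ∃ i, i < n ∧ i < γ.length ∧ P γ i = x := by
  obtain ⟨j, hj, hxj⟩ := List.mem_iff_getElem.mp hx
  rw [List.length_take] at hj
  have hj1 : j < n := lt_of_lt_of_le hj (min_le_left _ _)
  have hj2 : j < γ.length := lt_of_lt_of_le hj (min_le_right _ _)
  refine ⟨j, hj1, hj2, ?_⟩
  rw [List.getElem_take] at hxj
  rw [P_eq_getElem _ _ hj2]
  exact hxj

section main2
variable {u v : Vertex} {w wH wV : Vertex → ℝ}

lemma part2_core
    (hw : ∀ x, 0 ≤ w x)
    (hH : ∀ i : ℤ, 1 ≤ i → i ≤ v.1 - u.1 → w (u + i • e1) ≤ wH (u + i • e1))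
    (hV : ∀ j : ℤ, 1 ≤ j → j ≤ v.2 - u.2 → w (u + j • e2) ≤ wV (u + j • e2))
    {γb γ : List Vertex}
    (hb : IsBGeodesic wH wV w u v γb)
    (hup : ∀ γb' : List Vertex, IsBGeodesic wH wV w u v γb' → PathAbove γb γb')
    (he2 : (u + e2) ∈ γb)
    (hg : IsGeodesic w u v γ) :
    ∀ c : ℤ, u.1 ≤ c → c ≤ v.1 → mrow γ c ≤ mrow γb c := by
  have hbdir := hb.1
  have hgdir := hg.1
  intro c hc
  refine Int.le_induction (m := u.1)
    (motive := fun c _ => c ≤ v.1 → mrow γ c ≤ mrow γb c) ?_ ?_ c hc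
  · intro _
    rw [mrow_base hbdir, mrow_base hgdir]
  · intro c hc IH hc2
    by_contra hcon
    push_neg at hcon
    have hIH : mrow γ c ≤ mrow γb c := IH (by omega)
    set t := mrow γb (c+1) with htdef
    obtain ⟨k0, hk0len, hQ0, hQ1⟩ := entry_step hbdir (by omega) hc2
    rw [← htdef] at hQ0 hQ1
    have htc : mrow γ c ≤ t := by
      have hbc : mrow γb c ≤ t := by
        refine dir_mrow_le hbdir (dir_mem.mpr ⟨k0, by omega, ?_⟩)
        rw [hQ0]; norm_num
      omega
    obtain ⟨k, hklen, hP0, hP1⟩ := fill hgdir (by omega) hc2 t htc hcon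
    have htu2 : u.2 + 1 ≤ t := by
      have := row_ge_of_e2_mem hbdir he2 (k0+1) hk0len (by rw [hQ1]; norm_num; omega)
      rwa [hQ1] at this
    -- the two new paths
    have hstep1 : P γb (k0+1) = P γ k + e1 ∨ P γb (k0+1) = P γ k + e2 := by
      left; rw [hQ1, hP0, e1_def]
      exact Prod.ext_iff.mpr ⟨by norm_num, by norm_num⟩
    have hstep2 : P γ (k+1) = P γb k0 + e1 ∨ P γ (k+1) = P γb k0 + e2 := by
      right; rw [hP1, hQ0, e2_def]
      exact Prod.ext_iff.mpr ⟨by norm_num, by norm_num⟩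
    have hdir1 : IsDirPath u v (γ.take (k+1) ++ γb.drop (k0+1)) :=
      concat_dir hgdir hbdir (by omega) hk0len hstep1
    have hdir2 : IsDirPath u v (γb.take (k0+1) ++ γ.drop (k+1)) :=
      concat_dir hbdir hgdir (by omega) hklen hstep2
    -- bulk weight comparison
    have hW : pathWeight w (γ.take (k+1) ++ γb.drop (k0+1)) ≤ pathWeight w γ :=
      geodesic_dominates hw hg hdir1
    rw [pathWeight, pathWeight, sum_append' w, sum_split w γ (k+1)] at hW
    have hWtails : ((γb.drop (k0+1)).map w).sum ≤ ((γ.drop (k+1)).map w).sum := by linarith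
    -- boundary weights of the tails
    have hbW1 : ((γ.drop (k+1)).map w).sum ≤
        ((γ.drop (k+1)).map (bWeight wH wV w u v)).sum := by
      refine List.sum_le_sum ?_
      intro x hx
      obtain ⟨i, hni, hilen, hPi⟩ := mem_drop_ex hx
      obtain ⟨r1, r2, r3, r4⟩ := dir_rect hgdir i hilen
      have hcs := dir_csum hgdir i hilen
      rw [hPi] at r1 r2 r3 r4 hcs
      refine w_le_bWeight hw hH hV x r1 r2 r3 r4 ?_
      intro hxu
      rw [hxu] at hcs
      omega
    have hbW2 : ((γb.drop (k0+1)).map (bWeight wH wV w u v)).sum =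
        ((γb.drop (k0+1)).map w).sum := by
      refine congrArg List.sum (List.map_congr_left ?_)
      intro x hx
      obtain ⟨i, hni, hilen, hPi⟩ := mem_drop_ex hx
      obtain ⟨r1, r2, r3, r4⟩ := dir_rect hbdir i hilen
      have hcol := (dir_col_mono hbdir (k0+1) i hni hilen).1
      have hrow := (dir_col_mono hbdir (k0+1) i hni hilen).2
      rw [hQ1] at hcol hrow
      rw [hPi] at r2 r4 hcol hrow
      simp only at hcol hrow
      exact bWeight_eq_w x (by omega) r2 (by omega) r4
    -- γb'' is a boundary geodesic
    have hge : bPathWeight wH wV w u v γb ≤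
        bPathWeight wH wV w u v (γb.take (k0+1) ++ γ.drop (k+1)) := by
      rw [bPathWeight, bPathWeight, sum_append' _, sum_split (bWeight wH wV w u v) γb (k0+1)]
      linarith [hbW1, hWtails, hbW2]
    have hbgeo : IsBGeodesic wH wV w u v (γb.take (k0+1) ++ γ.drop (k+1)) :=
      bgeodesic_of_ge hw hH hV hb hdir2 hge
    -- the entry point of γ into column c+1 lies in the suffix
    obtain ⟨k2, hk2len, hR0, hR1⟩ := entry_step hgdir (by omega) hc2
    have hk2k : k + 1 ≤ k2 + 1 := by
      by_contra hlt
      have := (dir_col_mono hgdir (k2+1) k (by omega) (by omega)).1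
      rw [hR1, hP0] at this
      simp only at this
      omega
    have hentry_mem : ((c+1, mrow γ (c+1)) : Vertex) ∈ γ.drop (k+1) := by
      have := index_mem_drop (n := k+1) (i := k2+1) hk2k hk2len
      rwa [hR1] at this
    -- contradiction with upmostness at column c+1
    have habove := hup _ hbgeo (c+1) ?_ ?_
    · obtain ⟨y', hy'mem, hall⟩ := habove
      have h2 : y' ≤ t := by
        refine hall t ?_
        refine dir_mem.mpr ⟨k0+1, hk0len, ?_⟩
        rw [hQ1]
      -- y' is a row of γb'' in column c+1, hence ≥ mrow γ (c+1)
      rcases List.mem_append.mp hy'mem with hmem | hmem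
      · obtain ⟨j, hjn, hjlen, hPj⟩ := mem_take_ex hmem
        have := (dir_col_mono hbdir j k0 (by omega) (by omega)).1
        rw [hQ0, hPj] at this
        simp only at this
        omega
      · obtain ⟨j, hjn, hjlen, hPj⟩ := mem_drop_ex hmem
        have h3 : mrow γ (c+1) ≤ y' := dir_mrow_le hgdir (dir_mem.mpr ⟨j, hjlen, hPj⟩)
        omega
    · exact ⟨t, dir_mem.mpr ⟨k0+1, hk0len, by rw [hQ1]⟩⟩
    · exact ⟨mrow γ (c+1), List.mem_append_right _ hentry_mem⟩

end main2

/-- **Lemma 3.3: monotonicity of geodesics with respect to boundary weights.**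
Fix `u ≤ v`, nonnegative bulk weights `ω`, and boundary weights dominating the bulk
weights on the bottom-left boundary of `R_{u,v}`.  If the downmost boundary geodesic
from `u` to `v` passes through `u + e₁`, then the downmost bulk geodesic is above it;
symmetrically, if the upmost boundary geodesic passes through `u + e₂`, then it is
above the upmost bulk geodesic. -/
theorem geodesic_monotonicity_boundary
    (u v : Vertex) (huv : u.1 ≤ v.1 ∧ u.2 ≤ v.2)
    (w wH wV : Vertex → ℝ)
    (hw : ∀ x, 0 ≤ w x)
    (hH : ∀ i : ℤ, 1 ≤ i → i ≤ v.1 - u.1 → w (u + i • e1) ≤ wH (u + i • e1))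
    (hV : ∀ j : ℤ, 1 ≤ j → j ≤ v.2 - u.2 → w (u + j • e2) ≤ wV (u + j • e2)) :
    (∀ γb : List Vertex, IsBGeodesic wH wV w u v γb →
      (∀ γb' : List Vertex, IsBGeodesic wH wV w u v γb' → PathAbove γb' γb) →
      (u + e1) ∈ γb →
      ∀ γ : List Vertex, IsGeodesic w u v γ →
        (∀ γ' : List Vertex, IsGeodesic w u v γ' → PathAbove γ' γ) →
        PathAbove γ γb) ∧
    (∀ γb : List Vertex, IsBGeodesic wH wV w u v γb →
      (∀ γb' : List Vertex, IsBGeodesic wH wV w u v γb' → PathAbove γb γb') →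
      (u + e2) ∈ γb →
      ∀ γ : List Vertex, IsGeodesic w u v γ →
        (∀ γ' : List Vertex, IsGeodesic w u v γ' → PathAbove γ γ') →
        PathAbove γb γ) := by
  constructor
  · intro γb hb hdown he1 γ hg _
    intro c ⟨y, hyγ⟩ ⟨y0, hybγ⟩
    obtain ⟨i, hilen, hPi⟩ := dir_mem.mp hyγ
    obtain ⟨r1, r2, _, _⟩ := dir_rect hg.1 i hilen
    rw [hPi] at r1 r2
    simp only at r1 r2
    refine ⟨mrow γb c, mrow_mem hb.1 r1 r2, fun y' hy' => ?_⟩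
    exact le_trans (part1_core hw hH hV hb hdown he1 hg c r1 r2) (dir_mrow_le hg.1 hy')
  · intro γb hb hup he2 γ hg _
    intro c ⟨y, hybγ⟩ ⟨y0, hyγ⟩
    obtain ⟨i, hilen, hPi⟩ := dir_mem.mp hybγ
    obtain ⟨r1, r2, _, _⟩ := dir_rect hb.1 i hilen
    rw [hPi] at r1 r2
    simp only at r1 r2
    refine ⟨mrow γ c, mrow_mem hg.1 r1 r2, fun y' hy' => ?_⟩
    exact le_trans (part2_core hw hH hV hb hup he2 hg c r1 r2) (dir_mrow_le hb.1 hy')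

end Stmt18
end
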